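/- arXiv:0806.3433 — 11 statements merged into one kernel-verified Lean document; each statement's English description precedes it below -/
import Mathlib

section
/- Let D = (P, B) be a 2-(v,k,λ) design with r blocks through each point, and suppose some subfamily of B partitions P (D has a partition into blocks). Let 𝔊 be the free abelian group on P, R the subgroup generated by the block sums ∑_{X ∈ 𝔟} X for 𝔟 ∈ B, and 𝔊_D = 𝔊/R. Then for every point X ∈ P, the element x = X + R satisfies (r−λ)·x = 0. -/
/-- If a 2-(v,k,λ) design with r blocks through each point has a
partition into blocks, then in 𝔊_D every point X satisfies (r−λ)·(X + R) = 0. -/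
theorem stmt_1 {α : Type*} [Fintype α] [DecidableEq α]
    (B : Finset (Finset α)) (v k lam r : ℕ)
    (hv : Fintype.card α = v)
    (hk : ∀ b ∈ B, b.card = k)
    (hlam : ∀ x y : α, x ≠ y → (B.filter (fun b => x ∈ b ∧ y ∈ b)).card = lam)
    (hr : ∀ x : α, (B.filter (fun b => x ∈ b)).card = r)
    (hpart : ∃ S : Finset (Finset α), S ⊆ B ∧
      (∀ b₁ ∈ S, ∀ b₂ ∈ S, b₁ ≠ b₂ → Disjoint b₁ b₂) ∧
      (∀ x : α, ∃ b ∈ S, x ∈ b))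
    (R : AddSubgroup (FreeAbelianGroup α))
    (hR : R = AddSubgroup.closure {g | ∃ b ∈ B, g = ∑ p ∈ b, FreeAbelianGroup.of p})
    (X : α) :
    ((r : ℤ) - (lam : ℤ)) •
      (QuotientAddGroup.mk (FreeAbelianGroup.of X) : FreeAbelianGroup α ⧸ R) = 0 := by
  obtain ⟨S, hSB, hdisj, hcover⟩ := hpart
  set f : α → FreeAbelianGroup α ⧸ R :=
    fun p => QuotientAddGroup.mk (FreeAbelianGroup.of p) with hf
  -- every block sums to 0 in the quotient
  have hblock : ∀ b ∈ B, ∑ p ∈ b, f p = 0 := by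
    intro b hb
    have hmem : (∑ p ∈ b, FreeAbelianGroup.of p) ∈ R := by
      rw [hR]; exact AddSubgroup.subset_closure ⟨b, hb, rfl⟩
    have : ∑ p ∈ b, f p =
        (QuotientAddGroup.mk (∑ p ∈ b, FreeAbelianGroup.of p) :
          FreeAbelianGroup α ⧸ R) := by
      simp [hf]
    rw [this, QuotientAddGroup.eq_zero_iff]
    exact hmem
  -- total sum over all points is 0, via the partition
  have huniv : (Finset.univ : Finset α) = S.biUnion id := by
    ext x
    simp only [Finset.mem_univ, Finset.mem_biUnion, id, true_iff]
    exact hcover x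
  have htotal : ∑ p : α, f p = 0 := by
    rw [huniv, Finset.sum_biUnion]
    · exact Finset.sum_eq_zero fun b hb => hblock b (hSB hb)
    · intro b₁ h₁ b₂ h₂ hne
      exact hdisj b₁ h₁ b₂ h₂ hne
  -- sum over blocks through X
  have hkey : ∑ b ∈ B.filter (fun b => X ∈ b), ∑ p ∈ b, f p = 0 :=
    Finset.sum_eq_zero fun b hb => hblock b (Finset.mem_filter.mp hb).1
  -- rewrite as a sum over points with multiplicities
  have hswap : ∑ b ∈ B.filter (fun b => X ∈ b), ∑ p ∈ b, f p =
      ∑ p : α, ((B.filter (fun b => X ∈ b)).filter (fun b => p ∈ b)).card • f p := by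
    have step : ∀ b ∈ B.filter (fun b => X ∈ b), ∑ p ∈ b, f p =
        ∑ p : α, if p ∈ b then f p else 0 := by
      intro b _
      rw [Finset.sum_ite_mem, Finset.univ_inter]
    rw [Finset.sum_congr rfl step, Finset.sum_comm]
    refine Finset.sum_congr rfl fun p _ => ?_
    rw [← Finset.sum_filter, Finset.sum_const]
  have hcount : ∀ p : α,
      ((B.filter (fun b => X ∈ b)).filter (fun b => p ∈ b)).card
        = if p = X then r else lam := by
    intro p
    rw [Finset.filter_filter]
    by_cases hp : p = X
    · subst hp
      simp only [if_pos rfl]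
      rw [← hr p]
      congr 1
      ext b; simp
    · rw [if_neg hp]
      rw [← hlam X p (Ne.symm hp)]
  have h0 : ∑ p : α, (if p = X then r else lam) • f p = 0 := by
    rw [← hkey, hswap]
    exact Finset.sum_congr rfl fun p _ => by rw [hcount p]
  have h1 : ∑ p : α, lam • f p = 0 := by
    rw [← Finset.smul_sum, htotal, smul_zero]
  have h2 : ∑ p : α, ((if p = X then r else lam) • f p - lam • f p) =
      r • f X - lam • f X := by
    have := Finset.sum_eq_single_of_mem (s := Finset.univ)
      (f := fun p => (if p = X then r else lam) • f p - lam • f p) X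
      (Finset.mem_univ X) (fun p _ hp => by simp [hp])
    simpa using this
  rw [Finset.sum_sub_distrib, h0, h1, sub_zero] at h2
  have : (r : ℤ) • f X - (lam : ℤ) • f X = 0 := by
    rw [natCast_zsmul, natCast_zsmul, h2.symm]
  rw [sub_smul]
  exact this
end

section
/- Let D = (P, B) be a 2-(v,k,λ) design with b blocks and incidence matrix A (the b × v integer matrix with A_{j,i} = 1 if point P_i belongs to block 𝔟_j and 0 otherwise). If the canonical map P → 𝔊_D, X ↦ X + R, is not injective, then there exists an integer vector v ∈ ℤ^b such that v (A Aᵀ) vᵀ = 2. -/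
/-!
If points `X ≠ Y` have the same image in `𝔊_D`, then `Y - X` is an integer combination
`∑ c_j 𝔟_j` of block sums. Reading off coefficients gives `c A = e_Y - e_X`, hence
`c (A Aᵀ) cᵀ = ‖c A‖² = 2`.
-/

open Matrix FreeAbelianGroup

theorem FreeAbelianGroup.coeff_of_apply {α : Type*} [DecidableEq α] (i x : α) :
    coeff i (of x) = Pi.single (M := fun _ => ℤ) x 1 i := by
  simp [coeff, toFinsupp_of, Finsupp.single_apply, Pi.single_apply, eq_comm]

theorem FreeAbelianGroup.coeff_sum_of {α : Type*} [DecidableEq α] (s : Finset α) (i : α) :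
    coeff i (∑ x ∈ s, of x) = if i ∈ s then 1 else 0 := by
  simp [map_sum, coeff_of_apply, Pi.single_apply]

theorem Matrix.vecMul_mul_transpose_dotProduct {ι α R : Type*} [Fintype ι] [Fintype α]
    [CommRing R] (w : ι → R) (A : Matrix ι α R) :
    w ᵥ* (A * Aᵀ) ⬝ᵥ w = w ᵥ* A ⬝ᵥ w ᵥ* A := by
  rw [← vecMul_vecMul, vecMul_transpose, dotProduct_comm, dotProduct_mulVec]

theorem single_sub_single_dotProduct_self {α R : Type*} [Fintype α] [DecidableEq α]
    [Ring R] {x y : α} (hxy : x ≠ y) :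
    (Pi.single y (1 : R) - Pi.single x 1) ⬝ᵥ (Pi.single y (1 : R) - Pi.single x 1) =
      (2 : R) := by
  simp [dotProduct_sub, hxy, hxy.symm, one_add_one_eq_two]

section Incidence

variable {ι α : Type*} [Fintype ι] [DecidableEq α]

def incidenceMatrix (bl : ι → Finset α) : Matrix ι α ℤ :=
  Matrix.of fun j i => if i ∈ bl j then 1 else 0

theorem vecMul_incidenceMatrix_apply (bl : ι → Finset α) (c : ι → ℤ) (i : α) :
    (c ᵥ* incidenceMatrix bl) i = coeff i (∑ j, c j • ∑ x ∈ bl j, of x) := by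
  rw [map_sum]
  simp_rw [map_zsmul, coeff_sum_of]
  simp [vecMul, dotProduct, incidenceMatrix]

theorem exists_vecMul_incidenceMatrix_eq_coeff (bl : ι → Finset α) {g : FreeAbelianGroup α}
    (hg : g ∈ AddSubgroup.closure (Set.range fun j => ∑ x ∈ bl j, of x)) :
    ∃ c : ι → ℤ, c ᵥ* incidenceMatrix bl = fun i => coeff i g := by
  obtain ⟨c, rfl⟩ := AddSubgroup.mem_closure_range_iff_of_fintype.mp hg
  exact ⟨c, funext (vecMul_incidenceMatrix_apply bl c)⟩

end Incidence

theorem stmt_3_general (v b : ℕ)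
    (bl : Fin b → Finset (Fin v))
    (A : Matrix (Fin b) (Fin v) ℤ)
    (hA : A = Matrix.of fun j i => if i ∈ bl j then 1 else 0)
    (R : AddSubgroup (FreeAbelianGroup (Fin v)))
    (hR : R = AddSubgroup.closure
      {g | ∃ j : Fin b, g = ∑ i ∈ bl j, FreeAbelianGroup.of i})
    (hninj : ¬ Function.Injective (fun X : Fin v =>
      (QuotientAddGroup.mk (FreeAbelianGroup.of X) : FreeAbelianGroup (Fin v) ⧸ R))) :
    ∃ w : Fin b → ℤ,
      dotProduct (Matrix.vecMul w (A * A.transpose)) w = 2 := by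
  obtain ⟨x, y, hxy, hne⟩ := Function.not_injective_iff.mp hninj
  have hmem : of y - of x ∈ AddSubgroup.closure (Set.range fun j => ∑ i ∈ bl j, of i) := by
    have hset :
        {g | ∃ j : Fin b, g = ∑ i ∈ bl j, of i} = Set.range fun j => ∑ i ∈ bl j, of i := by
      ext g; simp [eq_comm]
    rwa [QuotientAddGroup.eq, hR, hset, neg_add_eq_sub] at hxy
  obtain ⟨c, hc⟩ := exists_vecMul_incidenceMatrix_eq_coeff bl hmem
  have hcA : c ᵥ* A = Pi.single y 1 - Pi.single x 1 := by
    rw [hA]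
    change c ᵥ* incidenceMatrix bl = _
    rw [hc]
    ext i
    simp [coeff_of_apply]
  exact ⟨c, by rw [vecMul_mul_transpose_dotProduct, hcA, single_sub_single_dotProduct_self hne]⟩

/-- For a 2-(v,k,λ) design with b blocks and incidence matrix A,
if the canonical map P → 𝔊_D is not injective, then there is an integer vector w
with w (A Aᵀ) wᵀ = 2. -/
theorem stmt_3 (v b k lam : ℕ)
    (bl : Fin b → Finset (Fin v)) (hinj : Function.Injective bl)
    (hk : ∀ j, (bl j).card = k)
    (hlam : ∀ x y : Fin v, x ≠ y →
      (Finset.univ.filter (fun j => x ∈ bl j ∧ y ∈ bl j)).card = lam)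
    (A : Matrix (Fin b) (Fin v) ℤ)
    (hA : A = Matrix.of fun j i => if i ∈ bl j then 1 else 0)
    (R : AddSubgroup (FreeAbelianGroup (Fin v)))
    (hR : R = AddSubgroup.closure
      {g | ∃ j : Fin b, g = ∑ i ∈ bl j, FreeAbelianGroup.of i})
    (hninj : ¬ Function.Injective (fun X : Fin v =>
      (QuotientAddGroup.mk (FreeAbelianGroup.of X) : FreeAbelianGroup (Fin v) ⧸ R))) :
    ∃ w : Fin b → ℤ,
      dotProduct (Matrix.vecMul w (A * A.transpose)) w = 2 :=
  stmt_3_general v b bl A hA R hR hninj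
end

section
/- Let D = (P, B) be a Steiner triple system, i.e., a 2-(v,3,1) design, with v ≡ 1 (mod 12). Then the canonical map P → 𝔊_D, X ↦ X + R, is not injective; that is, D is not embeddable in the group 𝔊_D. -/
open Finset
set_option linter.unusedSectionVars false

/-- An involution without fixed points on a finite set gives even cardinality. -/
lemma even_card_of_invol {β : Type*} [DecidableEq β] :
    ∀ (s : Finset β), ∀ (f : β → β), (∀ a ∈ s, f a ∈ s) → (∀ a ∈ s, f (f a) = a) →
    (∀ a ∈ s, f a ≠ a) → Even s.card := by
  intro s
  induction s using Finset.strongInduction with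
  | _ s ih =>
    intro f hmem hinv hne
    rcases s.eq_empty_or_nonempty with rfl | ⟨a, ha⟩
    · simp
    · have hfa : f a ∈ s := hmem a ha
      have hni : f a ≠ a := hne a ha
      set s' := (s.erase a).erase (f a) with hs'
      have hsub : s' ⊆ s := fun x hx => Finset.mem_of_mem_erase (Finset.mem_of_mem_erase hx)
      have hass : a ∉ s' := by
        intro h
        exact (Finset.ne_of_mem_erase (Finset.mem_of_mem_erase h)) rfl
      have hfss : f a ∉ s' := by
        intro h
        exact (Finset.ne_of_mem_erase h) rfl
      have hmem' : ∀ b ∈ s', f b ∈ s' := by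
        intro b hb
        have hbs : b ∈ s := hsub hb
        have h1 : f b ≠ f a := by
          intro h
          have : f (f b) = f (f a) := by rw [h]
          rw [hinv b hbs, hinv a ha] at this
          exact (Finset.ne_of_mem_erase (Finset.mem_of_mem_erase hb)) this
        have h2 : f b ≠ a := by
          intro h
          have : f (f b) = f a := by rw [h]
          rw [hinv b hbs] at this
          exact hfss (this ▸ hb)
        exact Finset.mem_erase.mpr ⟨h1, Finset.mem_erase.mpr ⟨h2, hmem b hbs⟩⟩
      have hss : s' ⊂ s := Finset.ssubset_of_subset_of_ssubset
        (Finset.Subset.refl s') (by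
          refine Finset.ssubset_iff_of_subset hsub |>.mpr ⟨a, ha, hass⟩)
      have hev := ih s' hss f hmem' (fun b hb => hinv b (hsub hb)) (fun b hb => hne b (hsub hb))
      have hfae : f a ∈ s.erase a := Finset.mem_erase.mpr ⟨hni, hfa⟩
      have hc1 : s'.card + 1 = (s.erase a).card := Finset.card_erase_add_one hfae
      have hc2 : (s.erase a).card + 1 = s.card := Finset.card_erase_add_one ha
      have : s.card = s'.card + 2 := by omega
      rw [this]
      rcases hev with ⟨t, ht⟩
      exact ⟨t + 1, by omega⟩

section Endgame

variable {A : Type*} [AddCommGroup A] [DecidableEq A]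

/-- Endgame: a finite set of size ≥ 5 in a 2,3-torsion-free abelian group closed under
(a,b) ↦ -a-b for distinct a,b, and avoiding -2a for nonzero a, is impossible. -/
lemma endgame (h2 : ∀ x : A, x + x = 0 → x = 0) (h3 : ∀ x : A, x + x + x = 0 → x = 0)
    (V : Finset A) (h5 : 5 ≤ V.card)
    (H1 : ∀ a ∈ V, ∀ b ∈ V, a ≠ b → -a - b ∈ V)
    (H2 : ∀ a ∈ V, a ≠ 0 → -(a + a) ∉ V) : False := by
  -- reflection: b + b - e ∈ V
  have refl : ∀ b ∈ V, ∀ e ∈ V, b + b - e ∈ V := by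
    intro b hb e he
    rcases eq_or_ne e b with rfl | hne
    · simpa using hb
    · set S : Finset A := insert 0 (insert b (insert e {-b - e})) with hS
      have hcard : S.card ≤ 4 := by
        apply le_trans (Finset.card_insert_le _ _)
        have : (insert b (insert e ({-b - e} : Finset A))).card ≤ 3 := by
          apply le_trans (Finset.card_insert_le _ _)
          have : (insert e ({-b - e} : Finset A)).card ≤ 2 := by
            apply le_trans (Finset.card_insert_le _ _)
            simp
          omega
        omega
      have : ¬ V ⊆ S := by
        intro h
        have := Finset.card_le_card h
        omega
      rw [Finset.not_subset] at this
      obtain ⟨a, haV, haS⟩ := this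
      simp only [hS, Finset.mem_insert, Finset.mem_singleton] at haS
      push_neg at haS
      obtain ⟨ha0, hab, hae, habe⟩ := haS
      have hc : -a - b ∈ V := H1 a haV b hb hab
      have hf : -a - e ∈ V := H1 a haV e he hae
      have hfb : -a - e ≠ b := by
        intro h
        apply habe
        linear_combination (norm := abel) -h
      have hg : -(-a - e) - b ∈ V := H1 _ hf b hb hfb
      have hgc : -(-a - e) - b ≠ -a - b := by
        intro h
        have : e = -(a + a) := by linear_combination (norm := abel) h
        exact H2 a haV ha0 (this ▸ he)
      have := H1 _ hg _ hc hgc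
      have heq : -(-(-a - e) - b) - (-a - b) = b + b - e := by abel
      rwa [heq] at this
  -- sums
  obtain ⟨n, hn⟩ : ∃ n, V.card = n + 1 := ⟨V.card - 1, by omega⟩
  obtain ⟨a, haV, b, hbV, hab⟩ := Finset.one_lt_card.mp (by omega : 1 < V.card)
  have e1 : ∀ a ∈ V, (∑ x ∈ V, x) + (∑ x ∈ V, x) = a + a - n • a := by
    intro a ha
    have hbij : ∑ x ∈ V.erase a, (-a - x) = ∑ x ∈ V.erase a, x := by
      apply Finset.sum_bij (i := fun x _ => -a - x)
      · intro x hx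
        obtain ⟨hxa, hxV⟩ := Finset.mem_erase.mp hx
        have hmem : -a - x ∈ V := H1 a ha x hxV (Ne.symm hxa)
        refine Finset.mem_erase.mpr ⟨?_, hmem⟩
        intro h
        rcases eq_or_ne a 0 with rfl | ha0
        · apply hxa; simpa using h.symm
        · apply H2 a ha ha0
          have : x = -(a + a) := by linear_combination (norm := abel) -h
          exact this ▸ hxV
      · intro x hx y hy hxy
        have : x = y := by linear_combination (norm := abel) -hxy
        exact this
      · intro y hy
        obtain ⟨hya, hyV⟩ := Finset.mem_erase.mp hy
        refine ⟨-a - y, ?_, by abel⟩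
        refine Finset.mem_erase.mpr ⟨?_, H1 a ha y hyV (Ne.symm hya)⟩
        intro h
        rcases eq_or_ne a 0 with rfl | ha0
        · apply hya; simpa using h.symm
        · apply H2 a ha ha0
          have : y = -(a + a) := by linear_combination (norm := abel) -h
          exact this ▸ hyV
      · intro x hx; rfl
    have hsum1 : ∑ x ∈ V.erase a, (-a - x) =
        (V.erase a).card • (-a) - ∑ x ∈ V.erase a, x := by
      rw [Finset.sum_sub_distrib, Finset.sum_const]
    have hcarde : (V.erase a).card = n := by
      have := Finset.card_erase_add_one ha
      omega
    have herase : a + ∑ x ∈ V.erase a, x = ∑ x ∈ V, x := by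
      simpa using Finset.add_sum_erase V (fun x => x) ha
    rw [hsum1, hcarde, smul_neg] at hbij
    rw [← herase]
    linear_combination (norm := abel) -hbij
  have e2 : ∀ b ∈ V, (∑ x ∈ V, x) + (∑ x ∈ V, x) = V.card • (b + b) := by
    intro b hb
    have hbij : ∑ x ∈ V, (b + b - x) = ∑ x ∈ V, x := by
      apply Finset.sum_bij (i := fun x _ => b + b - x)
      · intro x hx
        exact refl b hb x hx
      · intro x hx y hy hxy
        have : x = y := by linear_combination (norm := abel) -hxy
        exact this
      · intro y hy
        refine ⟨b + b - y, refl b hb y hy, by abel⟩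
      · intro x hx; rfl
    have hsum1 : ∑ x ∈ V, (b + b - x) = V.card • (b + b) - ∑ x ∈ V, x := by
      rw [Finset.sum_sub_distrib, Finset.sum_const]
    rw [hsum1] at hbij
    linear_combination (norm := abel) -hbij
  have hzero : ∀ a ∈ V, n • a = 0 := by
    intro a ha
    have h1 := e1 a ha
    have h2' := e2 a ha
    rw [hn, succ_nsmul (a + a) n, smul_add n a a] at h2'
    have key : n • a + n • a + n • a = (n • a + n • a + (a + a)) - (a + a - n • a) := by abel
    rw [← h2', ← h1] at key
    simp only [sub_self] at key
    exact h3 _ key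
  have haa : a + a = b + b := by
    have h1 := e1 a haV
    have h1' := e1 b hbV
    rw [hzero a haV] at h1
    rw [hzero b hbV] at h1'
    rw [h1] at h1'
    linear_combination (norm := abel) h1'
  exact hab (sub_eq_zero.mp (h2 (a - b) (by linear_combination (norm := abel) haa)))

end Endgame

section STS

variable {α : Type*} [Fintype α] [DecidableEq α]

open Classical in
/-- The third point of the block through `x` and `y`. -/
noncomputable def third (B : Finset (Finset α)) (x y : α) : α :=
  if h : ∃ z, (z ≠ x ∧ z ≠ y) ∧ ∃ b ∈ B, x ∈ b ∧ y ∈ b ∧ z ∈ b then h.choose else x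

variable {B : Finset (Finset α)}

lemma block_unique (hlam : ∀ x y : α, x ≠ y → (B.filter (fun b => x ∈ b ∧ y ∈ b)).card = 1)
    {x y : α} (hxy : x ≠ y) {b b' : Finset α}
    (hb : b ∈ B) (hxb : x ∈ b) (hyb : y ∈ b)
    (hb' : b' ∈ B) (hxb' : x ∈ b') (hyb' : y ∈ b') : b = b' := by
  have h1 : b ∈ B.filter (fun b => x ∈ b ∧ y ∈ b) := Finset.mem_filter.mpr ⟨hb, hxb, hyb⟩
  have h2 : b' ∈ B.filter (fun b => x ∈ b ∧ y ∈ b) := Finset.mem_filter.mpr ⟨hb', hxb', hyb'⟩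
  exact Finset.card_le_one.mp (le_of_eq (hlam x y hxy)) _ h1 _ h2

lemma block_exists (hlam : ∀ x y : α, x ≠ y → (B.filter (fun b => x ∈ b ∧ y ∈ b)).card = 1)
    {x y : α} (hxy : x ≠ y) : ∃ b ∈ B, x ∈ b ∧ y ∈ b := by
  have : (B.filter (fun b => x ∈ b ∧ y ∈ b)).Nonempty := by
    rw [← Finset.card_pos, hlam x y hxy]; norm_num
  obtain ⟨b, hb⟩ := this
  rw [Finset.mem_filter] at hb
  exact ⟨b, hb.1, hb.2⟩

lemma third_exists (hk : ∀ b ∈ B, b.card = 3)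
    (hlam : ∀ x y : α, x ≠ y → (B.filter (fun b => x ∈ b ∧ y ∈ b)).card = 1)
    {x y : α} (hxy : x ≠ y) :
    ∃ z, (z ≠ x ∧ z ≠ y) ∧ ∃ b ∈ B, x ∈ b ∧ y ∈ b ∧ z ∈ b := by
  obtain ⟨b, hb, hxb, hyb⟩ := block_exists hlam hxy
  have hns : ¬ b ⊆ ({x, y} : Finset α) := by
    intro h
    have h1 := Finset.card_le_card h
    rw [hk b hb, Finset.card_pair hxy] at h1
    omega
  obtain ⟨z, hzb, hz⟩ := Finset.not_subset.mp hns
  simp only [Finset.mem_insert, Finset.mem_singleton] at hz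
  push_neg at hz
  exact ⟨z, ⟨hz.1, hz.2⟩, b, hb, hxb, hyb, hzb⟩

lemma third_spec (hk : ∀ b ∈ B, b.card = 3)
    (hlam : ∀ x y : α, x ≠ y → (B.filter (fun b => x ∈ b ∧ y ∈ b)).card = 1)
    {x y : α} (hxy : x ≠ y) :
    (third B x y ≠ x ∧ third B x y ≠ y) ∧
      ∃ b ∈ B, x ∈ b ∧ y ∈ b ∧ third B x y ∈ b := by
  have hex := third_exists hk hlam hxy
  rw [third, dif_pos hex]
  exact hex.choose_spec

lemma block_eq_triple (hk : ∀ b ∈ B, b.card = 3) {b : Finset α} (hb : b ∈ B)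
    {x y z : α} (hx : x ∈ b) (hy : y ∈ b) (hz : z ∈ b)
    (hxy : x ≠ y) (hxz : x ≠ z) (hyz : y ≠ z) : b = {x, y, z} := by
  have hsub : ({x, y, z} : Finset α) ⊆ b := by
    intro w hw
    simp only [Finset.mem_insert, Finset.mem_singleton] at hw
    rcases hw with rfl | rfl | rfl <;> assumption
  have hcard : ({x, y, z} : Finset α).card = 3 := by
    rw [Finset.card_insert_of_notMem (by simp [hxy, hxz]),
      Finset.card_insert_of_notMem (by simp [hyz]), Finset.card_singleton]
  exact (Finset.eq_of_subset_of_card_le hsub (by rw [hk b hb, hcard])).symm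

lemma third_unique (hk : ∀ b ∈ B, b.card = 3)
    (hlam : ∀ x y : α, x ≠ y → (B.filter (fun b => x ∈ b ∧ y ∈ b)).card = 1)
    {x y z : α} (hxy : x ≠ y)
    (hz : (z ≠ x ∧ z ≠ y) ∧ ∃ b ∈ B, x ∈ b ∧ y ∈ b ∧ z ∈ b) : z = third B x y := by
  obtain ⟨⟨hzx, hzy⟩, b, hb, hxb, hyb, hzb⟩ := hz
  obtain ⟨⟨htx, hty⟩, b', hb', hxb', hyb', htb'⟩ := third_spec hk hlam hxy
  have hbb : b = b' := block_unique hlam hxy hb hxb hyb hb' hxb' hyb'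
  subst hbb
  have hbe := block_eq_triple hk hb hxb hyb htb' hxy (Ne.symm htx) (Ne.symm hty)
  rw [hbe] at hzb
  simp only [Finset.mem_insert, Finset.mem_singleton] at hzb
  rcases hzb with rfl | rfl | h
  · exact absurd rfl hzx
  · exact absurd rfl hzy
  · exact h

lemma third_comm (hk : ∀ b ∈ B, b.card = 3)
    (hlam : ∀ x y : α, x ≠ y → (B.filter (fun b => x ∈ b ∧ y ∈ b)).card = 1)
    {x y : α} (hxy : x ≠ y) : third B x y = third B y x := by
  obtain ⟨⟨htx, hty⟩, b, hb, hxb, hyb, htb⟩ := third_spec hk hlam hxy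
  exact third_unique hk hlam (Ne.symm hxy) ⟨⟨hty, htx⟩, b, hb, hyb, hxb, htb⟩

lemma third_third (hk : ∀ b ∈ B, b.card = 3)
    (hlam : ∀ x y : α, x ≠ y → (B.filter (fun b => x ∈ b ∧ y ∈ b)).card = 1)
    {x y : α} (hxy : x ≠ y) : third B x (third B x y) = y := by
  obtain ⟨⟨htx, hty⟩, b, hb, hxb, hyb, htb⟩ := third_spec hk hlam hxy
  exact (third_unique hk hlam (Ne.symm htx)
    ⟨⟨Ne.symm hxy, Ne.symm hty⟩, b, hb, hxb, htb, hyb⟩).symm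

variable {A : Type*} [AddCommGroup A]

lemma u_third (hk : ∀ b ∈ B, b.card = 3)
    (hlam : ∀ x y : α, x ≠ y → (B.filter (fun b => x ∈ b ∧ y ∈ b)).card = 1)
    {u : α → A} (hu : ∀ b ∈ B, ∑ p ∈ b, u p = 0)
    {x y : α} (hxy : x ≠ y) : u x + u y + u (third B x y) = 0 := by
  obtain ⟨⟨htx, hty⟩, b, hb, hxb, hyb, htb⟩ := third_spec hk hlam hxy
  have hbe := block_eq_triple hk hb hxb hyb htb hxy (Ne.symm htx) (Ne.symm hty)
  have := hu b hb
  rw [hbe] at this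
  rw [Finset.sum_insert (by simp [hxy, Ne.symm htx]),
    Finset.sum_insert (by simp [Ne.symm hty]), Finset.sum_singleton] at this
  linear_combination (norm := abel) this

lemma master [DecidableEq A] (hk : ∀ b ∈ B, b.card = 3)
    (hlam : ∀ x y : α, x ≠ y → (B.filter (fun b => x ∈ b ∧ y ∈ b)).card = 1)
    {u : α → A} (hu : ∀ b ∈ B, ∑ p ∈ b, u p = 0) (p : α) (c : A) :
    ((univ.erase p).filter (fun w => u w = c)).card =
      ((univ.erase p).filter (fun w => u w = -u p - c)).card := by
  have key : ∀ c : A, ∀ w, w ∈ (univ.erase p).filter (fun w => u w = c) →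
      third B p w ∈ (univ.erase p).filter (fun w => u w = -u p - c) := by
    intro c w hw
    rw [Finset.mem_filter, Finset.mem_erase] at hw
    obtain ⟨⟨hwp, -⟩, hwc⟩ := hw
    have hpw : p ≠ w := Ne.symm hwp
    obtain ⟨⟨htp, htw⟩, -⟩ := third_spec hk hlam hpw
    rw [Finset.mem_filter, Finset.mem_erase]
    refine ⟨⟨htp, Finset.mem_univ _⟩, ?_⟩
    have := u_third hk hlam hu hpw
    rw [hwc] at this
    linear_combination (norm := abel) this
  have inv : ∀ c : A, ∀ w, w ∈ (univ.erase p).filter (fun w => u w = c) →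
      third B p (third B p w) = w := by
    intro c w hw
    rw [Finset.mem_filter, Finset.mem_erase] at hw
    exact third_third hk hlam (Ne.symm hw.1.1)
  apply Finset.card_bij' (i := fun w _ => third B p w) (j := fun w _ => third B p w)
  · exact key c
  · intro w hw
    have h := key (-u p - c) w hw
    have : -u p - (-u p - c) = c := by abel
    rwa [this] at h
  · exact inv c
  · exact inv (-u p - c)

end STS

section Counting

variable {α : Type*} [Fintype α] [DecidableEq α] {B : Finset (Finset α)}
variable {A : Type*} [AddCommGroup A] [DecidableEq A]

/-- Number of points with label `c`. -/
def Ncount (u : α → A) (c : A) : ℕ := (univ.filter (fun w => u w = c)).card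

lemma filter_erase_eq (u : α → A) (p : α) (c : A) (h : u p ≠ c) :
    (univ.erase p).filter (fun w => u w = c) = univ.filter (fun w => u w = c) := by
  ext w
  simp only [Finset.mem_filter, Finset.mem_erase, Finset.mem_univ, true_and, and_true]
  constructor
  · rintro ⟨-, h2⟩; exact h2
  · intro h2
    exact ⟨fun he => h (he ▸ h2), h2⟩

variable (hk : ∀ b ∈ B, b.card = 3)
    (hlam : ∀ x y : α, x ≠ y → (B.filter (fun b => x ∈ b ∧ y ∈ b)).card = 1)
    {u : α → A} (hu : ∀ b ∈ B, ∑ p ∈ b, u p = 0)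

include hk hlam hu

lemma count1 {p : α} {a : A} (hp : u p = a) (c : A) (h1 : c ≠ a) (h2c : -a - c ≠ a) :
    Ncount u c = Ncount u (-a - c) := by
  subst hp
  have hm := master hk hlam hu p c
  rw [filter_erase_eq u p c (Ne.symm h1), filter_erase_eq u p (-u p - c) (Ne.symm h2c)] at hm
  exact hm

lemma count2 {p : α} {a : A} (hp : u p = a) (h : -a - a ≠ a) :
    Ncount u a = Ncount u (-a - a) + 1 := by
  subst hp
  have hm := master hk hlam hu p (u p)
  have hL : (univ.erase p).filter (fun w => u w = u p) =
      (univ.filter (fun w => u w = u p)).erase p := by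
    ext w
    simp only [Finset.mem_filter, Finset.mem_erase, Finset.mem_univ, true_and, and_true]
    try tauto
  rw [hL, filter_erase_eq u p (-u p - u p) (Ne.symm h)] at hm
  have hpmem : p ∈ univ.filter (fun w => u w = u p) := by
    simp
  have := Finset.card_erase_add_one hpmem
  unfold Ncount
  omega

lemma parityN {p : α} {a : A} (hp : u p = a) (c : A) (hc : -a - c = c) (hpc : a ≠ c) :
    Even (Ncount u c) := by
  subst hp
  unfold Ncount
  rw [← filter_erase_eq u p c (hpc)]
  apply even_card_of_invol _ (fun w => third B p w)
  · intro w hw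
    rw [Finset.mem_filter, Finset.mem_erase] at hw
    obtain ⟨⟨hwp, -⟩, hwc⟩ := hw
    have hpw : p ≠ w := Ne.symm hwp
    obtain ⟨⟨htp, htw⟩, -⟩ := third_spec hk hlam hpw
    rw [Finset.mem_filter, Finset.mem_erase]
    refine ⟨⟨htp, Finset.mem_univ _⟩, ?_⟩
    have h3 := u_third hk hlam hu hpw
    rw [hwc] at h3
    have : u (third B p w) = -u p - c := by linear_combination (norm := abel) h3
    rw [this, hc]
  · intro w hw
    rw [Finset.mem_filter, Finset.mem_erase] at hw
    exact third_third hk hlam (Ne.symm hw.1.1)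
  · intro w hw
    rw [Finset.mem_filter, Finset.mem_erase] at hw
    obtain ⟨⟨hwp, -⟩, -⟩ := hw
    exact (third_spec hk hlam (Ne.symm hwp)).1.2

end Counting
section MainLemma

variable {α : Type*} [Fintype α] [DecidableEq α] {B : Finset (Finset α)}
variable {A : Type*} [AddCommGroup A]

lemma labeling_zero (hk : ∀ b ∈ B, b.card = 3)
    (hlam : ∀ x y : α, x ≠ y → (B.filter (fun b => x ∈ b ∧ y ∈ b)).card = 1)
    (hcard : 13 ≤ Fintype.card α)
    (h2 : ∀ x : A, x + x = 0 → x = 0) (h3 : ∀ x : A, x + x + x = 0 → x = 0)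
    {u : α → A} (hu : ∀ b ∈ B, ∑ p ∈ b, u p = 0) : ∀ p, u p = 0 := by
  classical
  by_contra hcon
  push_neg at hcon
  obtain ⟨p₀, hp₀⟩ := hcon
  set V : Finset A := univ.image u with hV
  have hmemV : ∀ c : A, c ∈ V ↔ ∃ p, u p = c := by
    intro c; simp [hV]
  have hNpos : ∀ c : A, 0 < Ncount u c ↔ c ∈ V := by
    intro c
    rw [hmemV]
    unfold Ncount
    rw [Finset.card_pos, Finset.filter_nonempty_iff]
    simp
  have hNzero : ∀ c : A, c ∉ V → Ncount u c = 0 := by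
    intro c hc
    by_contra h
    exact hc ((hNpos c).mp (Nat.pos_of_ne_zero h))
  have hsumN : ∑ c ∈ V, Ncount u c = Fintype.card α := by
    rw [hV, ← Finset.card_univ]
    exact (Finset.card_eq_sum_card_image u univ).symm
  have habel1 : ∀ c : A, (-(c + c) : A) = -c - c := by intro c; abel
  have hne3 : ∀ c : A, c ≠ 0 → -c - c ≠ c := by
    intro c hc h
    exact hc (h3 c (by linear_combination (norm := abel) -h))
  have hne2 : ∀ c : A, c ≠ 0 → -c ≠ c := by
    intro c hc h
    exact hc (h2 c (by linear_combination (norm := abel) -h))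
  by_cases h0 : (0 : A) ∈ V
  · -- Case A : 0 is a value of u
    obtain ⟨pz, hpz⟩ := (hmemV 0).mp h0
    have hsym : ∀ c : A, c ≠ 0 → Ncount u c = Ncount u (-c) := by
      intro c hc
      have h := count1 hk hlam hu hpz c hc (by simpa using hc)
      have he : (-(0:A) - c) = -c := by abel
      rwa [he] at h
    have hto0 : ∀ c : A, c ∈ V → c ≠ 0 → Ncount u c = Ncount u 0 := by
      intro c hc hc0
      obtain ⟨p, hp⟩ := (hmemV c).mp hc
      have ha := count1 hk hlam hu hp (-c) (hne2 c hc0)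
        (by
          intro h
          apply hc0
          have he : (-c - -c : A) = 0 := by abel
          rw [he] at h
          exact h.symm)
      have he : (-c - -c : A) = 0 := by abel
      rw [he] at ha
      rw [hsym c hc0, ha]
    have hN0 : Ncount u 0 = 1 := by
      have hpos : 0 < Ncount u 0 := (hNpos 0).mpr h0
      by_contra hne1
      set a := u p₀ with hadef
      have haV : a ∈ V := (hmemV a).mpr ⟨p₀, rfl⟩
      have hNa : Ncount u a = Ncount u 0 := hto0 a haV hp₀
      have hstep := count2 hk hlam hu (hadef.symm) (hne3 a hp₀)
      have hw0 : (-a - a : A) ≠ 0 := by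
        intro h
        exact hp₀ (h2 a (by linear_combination (norm := abel) -h))
      have hwV : (-a - a) ∈ V := (hNpos _).mp (by omega)
      have := hto0 _ hwV hw0
      omega
    have hNall : ∀ c ∈ V, Ncount u c = 1 := by
      intro c hc
      rcases eq_or_ne c 0 with rfl | hc0
      · exact hN0
      · rw [hto0 c hc hc0]; exact hN0
    have hH2 : ∀ c ∈ V, c ≠ 0 → -(c + c) ∉ V := by
      intro c hc hc0 hmem
      obtain ⟨p, hp⟩ := (hmemV c).mp hc
      have hstep := count2 hk hlam hu hp (hne3 c hc0)
      rw [hNall c hc] at hstep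
      have hz : Ncount u (-(c+c)) = 0 := by rw [habel1]; omega
      have := (hNpos _).mpr hmem
      omega
    have hcardV : 5 ≤ V.card := by
      have hherm : ∑ c ∈ V, Ncount u c = ∑ c ∈ V, 1 := Finset.sum_congr rfl hNall
      rw [Finset.sum_const, smul_eq_mul, mul_one] at hherm
      omega
    have hH1 : ∀ a ∈ V, ∀ b ∈ V, a ≠ b → -a - b ∈ V := by
      intro a ha b hb hab
      rcases eq_or_ne a 0 with rfl | ha0
      · have hb0 : b ≠ 0 := fun h => hab (h.symm)
        have hpos : 0 < Ncount u (-b) := by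
          rw [← hsym b hb0]; exact (hNpos b).mpr hb
        have he : (-(0:A) - b : A) = -b := by abel
        rw [he]; exact (hNpos _).mp hpos
      rcases eq_or_ne b 0 with rfl | hb0
      · have hpos : 0 < Ncount u (-a) := by
          rw [← hsym a ha0]; exact (hNpos a).mpr ha
        have he : (-a - (0:A) : A) = -a := by abel
        rw [he]; exact (hNpos _).mp hpos
      · obtain ⟨p, hp⟩ := (hmemV a).mp ha
        have h2c : -a - b ≠ a := by
          intro h
          apply hH2 a ha ha0
          have hb' : b = -(a + a) := by linear_combination (norm := abel) -h
          rw [← hb']; exact hb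
        have hcc := count1 hk hlam hu hp b (Ne.symm hab) h2c
        have hpos : 0 < Ncount u (-a - b) := by
          rw [← hcc]; exact (hNpos b).mpr hb
        exact (hNpos _).mp hpos
    exact endgame h2 h3 V hcardV hH1 hH2
  · -- Case B : 0 is not a value of u
    have hc0 : ∀ c ∈ V, c ≠ 0 := fun c hc h => h0 (h ▸ hc)
    have hN0 : Ncount u 0 = 0 := hNzero 0 h0
    have hstep : ∀ c ∈ V, Ncount u c = Ncount u (-c - c) + 1 := by
      intro c hc
      obtain ⟨p, hp⟩ := (hmemV c).mp hc
      exact count2 hk hlam hu hp (hne3 c (hc0 c hc))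
    have hparity : ∀ x, x ∈ V → (-(x + x)) ∈ V → Even (Ncount u x) := by
      intro x hx hw
      obtain ⟨p, hp⟩ := (hmemV _).mp hw
      apply parityN hk hlam hu hp x
      · abel
      · intro h
        exact hc0 x hx (h3 x (by linear_combination (norm := abel) -h))
    have hle2 : ∀ c ∈ V, Ncount u c ≤ 2 := by
      intro c hc
      by_contra hgt
      push_neg at hgt
      have hw : (-c - c) ∈ V := (hNpos _).mp (by have := hstep c hc; omega)
      have hw2 : (-(-c - c) - (-c - c)) ∈ V :=
        (hNpos _).mp (by have h1 := hstep c hc; have h2' := hstep _ hw; omega)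
      have hev1 : Even (Ncount u c) := hparity c hc (by rw [habel1]; exact hw)
      have hev2 : Even (Ncount u (-c - c)) := by
        apply hparity _ hw
        rw [habel1 (-c - c)]
        exact hw2
      have hst := hstep c hc
      rcases hev1 with ⟨k1, hk1⟩
      rcases hev2 with ⟨k2, hk2⟩
      omega
    have hcardV7 : 7 ≤ V.card := by
      have hb : ∑ c ∈ V, Ncount u c ≤ ∑ _c ∈ V, 2 := Finset.sum_le_sum hle2
      rw [Finset.sum_const, smul_eq_mul] at hb
      omega
    have hEq : ∀ a ∈ V, ∀ b ∈ V, Ncount u a = Ncount u b := by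
      have key : ∀ a ∈ V, ∀ z ∈ V, z ≠ a → z ≠ -(a + a) → -(z + z) ≠ a →
          Ncount u a = Ncount u z := by
        intro a ha z hz hza hzaa hz2a
        obtain ⟨pz', hpz'⟩ := (hmemV z).mp hz
        obtain ⟨pa, hpa⟩ := (hmemV a).mp ha
        have e1 := count1 hk hlam hu hpz' a (Ne.symm hza)
          (by
            intro h
            apply hz2a
            linear_combination (norm := abel) h)
        have e2 := count1 hk hlam hu hpa z hza
          (by
            intro h
            apply hzaa
            linear_combination (norm := abel) -h)
        have he : (-z - a : A) = -a - z := by abel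
        rw [he] at e1
        rw [e1, ← e2]
      intro a ha b hb
      rcases eq_or_ne a b with rfl | hab
      · rfl
      have hsub1 : ∀ w : A, (V.filter (fun z => -(z + z) = w)).card ≤ 1 := by
        intro w
        apply Finset.card_le_one.mpr
        intro x hx y hy
        rw [Finset.mem_filter] at hx hy
        have hxy : x + x = y + y := by
          linear_combination (norm := abel) hy.2 - hx.2
        exact sub_eq_zero.mp (h2 (x - y) (by linear_combination (norm := abel) hxy))
      set E : Finset A := (insert a (insert b (insert (-(a+a)) ({-(b+b)} : Finset A)))) ∪
          (V.filter (fun z => -(z+z) = a ∨ -(z+z) = b)) with hE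
      have hcardE : E.card ≤ 6 := by
        apply le_trans (Finset.card_union_le _ _)
        have c1 : (insert a (insert b (insert (-(a+a)) ({-(b+b)} : Finset A)))).card ≤ 4 := by
          apply le_trans (Finset.card_insert_le _ _)
          have : (insert b (insert (-(a+a)) ({-(b+b)} : Finset A))).card ≤ 3 := by
            apply le_trans (Finset.card_insert_le _ _)
            have : (insert (-(a+a)) ({-(b+b)} : Finset A)).card ≤ 2 := by
              apply le_trans (Finset.card_insert_le _ _)
              simp
            omega
          omega
        have c2 : (V.filter (fun z => -(z+z) = a ∨ -(z+z) = b)).card ≤ 2 := by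
          rw [Finset.filter_or]
          apply le_trans (Finset.card_union_le _ _)
          have := hsub1 a
          have := hsub1 b
          omega
        omega
      have hzex : ∃ z ∈ V, z ∉ E := by
        by_contra h
        push_neg at h
        have hVE : V ⊆ E := fun z hz => h z hz
        have := Finset.card_le_card hVE
        omega
      obtain ⟨z, hzV, hzE⟩ := hzex
      rw [hE] at hzE
      simp only [Finset.mem_union, Finset.mem_insert, Finset.mem_singleton,
        Finset.mem_filter, not_or] at hzE
      push_neg at hzE
      obtain ⟨⟨hza, hzb, hzaa, hzbb⟩, hzf⟩ := hzE
      have hz2 := hzf hzV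
      rw [key a ha z hzV hza hzaa hz2.1, key b hb z hzV hzb hzbb hz2.2]
    obtain ⟨a₀, ha₀⟩ := Finset.card_pos.mp (by omega : 0 < V.card)
    have hs1 : Ncount u a₀ = 1 := by
      by_contra hne1
      have hpos := (hNpos a₀).mpr ha₀
      have hw : (-a₀ - a₀) ∈ V := (hNpos _).mp (by have := hstep a₀ ha₀; omega)
      have heq := hEq _ hw a₀ ha₀
      have := hstep a₀ ha₀
      omega
    have hNall : ∀ c ∈ V, Ncount u c = 1 := by
      intro c hc
      rw [hEq c hc a₀ ha₀]
      exact hs1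
    have hH2 : ∀ c ∈ V, c ≠ 0 → -(c+c) ∉ V := by
      intro c hc _ hmem
      have hst := hstep c hc
      rw [hNall c hc] at hst
      have hz : Ncount u (-(c+c)) = 0 := by rw [habel1]; omega
      have := (hNpos _).mpr hmem
      omega
    have hH1 : ∀ a ∈ V, ∀ b ∈ V, a ≠ b → -a - b ∈ V := by
      intro a ha b hb hab
      obtain ⟨p, hp⟩ := (hmemV a).mp ha
      have h2c : -a - b ≠ a := by
        intro h
        apply hH2 a ha (hc0 a ha)
        have hb' : b = -(a + a) := by linear_combination (norm := abel) -h
        rw [← hb']; exact hb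
      have hcc := count1 hk hlam hu hp b (Ne.symm hab) h2c
      have hpos : 0 < Ncount u (-a - b) := by
        rw [← hcc, hNall b hb]; omega
      exact (hNpos _).mp hpos
    exact endgame h2 h3 V (by omega) hH1 hH2

end MainLemma
section Final

variable {α : Type*} [Fintype α] [DecidableEq α] {B : Finset (Finset α)}

lemma sigma_bij_core (hk : ∀ b ∈ B, b.card = 3)
    (hlam : ∀ x y : α, x ≠ y → (B.filter (fun b => x ∈ b ∧ y ∈ b)).card = 1)
    (x : α) {M : Type*} [AddCommMonoid M] (f : α → M) :
    ∑ y ∈ (B.filter (fun b => x ∈ b)).sigma (fun b => b.erase x), f y.2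
      = ∑ w ∈ univ.erase x, f w := by
  apply Finset.sum_bij (i := fun y _ => y.2)
  · rintro ⟨b, p⟩ h
    rw [Finset.mem_sigma, Finset.mem_filter] at h
    exact Finset.mem_erase.mpr ⟨Finset.ne_of_mem_erase h.2, Finset.mem_univ _⟩
  · rintro ⟨b, p⟩ h1 ⟨b', p'⟩ h2 h
    simp only at h
    subst h
    rw [Finset.mem_sigma, Finset.mem_filter] at h1 h2
    have hpx : p ≠ x := Finset.ne_of_mem_erase h1.2
    have hbb : b = b' := block_unique hlam (Ne.symm hpx) h1.1.1 h1.1.2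
      (Finset.mem_of_mem_erase h1.2) h2.1.1 h2.1.2 (Finset.mem_of_mem_erase h2.2)
    subst hbb
    rfl
  · intro w hw
    have hwx : w ≠ x := Finset.ne_of_mem_erase hw
    obtain ⟨b, hb, hxb, hwb⟩ := block_exists hlam (Ne.symm hwx)
    refine ⟨⟨b, w⟩, ?_, rfl⟩
    rw [Finset.mem_sigma, Finset.mem_filter]
    exact ⟨⟨hb, hxb⟩, Finset.mem_erase.mpr ⟨hwx, hwb⟩⟩
  · intro y hy
    rfl

lemma point_degree (hk : ∀ b ∈ B, b.card = 3)
    (hlam : ∀ x y : α, x ≠ y → (B.filter (fun b => x ∈ b ∧ y ∈ b)).card = 1)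
    (x : α) : 2 * (B.filter (fun b => x ∈ b)).card + 1 = Fintype.card α := by
  have hcs := sigma_bij_core hk hlam x (M := ℕ) (fun _ => 1)
  rw [Finset.sum_const, Finset.sum_const, Finset.card_sigma] at hcs
  have h2 : ∀ b ∈ B.filter (fun b => x ∈ b), (b.erase x).card = 2 := by
    intro b hb
    rw [Finset.mem_filter] at hb
    rw [Finset.card_erase_of_mem hb.2, hk b hb.1]
  rw [Finset.sum_congr rfl h2, Finset.sum_const] at hcs
  have hce := Finset.card_erase_add_one (Finset.mem_univ x)
  rw [Finset.card_univ] at hce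
  simp only [smul_eq_mul, mul_one] at hcs
  omega

lemma sum_blocks_through (hk : ∀ b ∈ B, b.card = 3)
    (hlam : ∀ x y : α, x ≠ y → (B.filter (fun b => x ∈ b ∧ y ∈ b)).card = 1)
    (x : α) {M : Type*} [AddCommMonoid M] (f : α → M) :
    ∑ b ∈ B.filter (fun b => x ∈ b), ∑ p ∈ b, f p
      = (B.filter (fun b => x ∈ b)).card • f x + ∑ w ∈ univ.erase x, f w := by
  have h1 : ∀ b ∈ B.filter (fun b => x ∈ b), ∑ p ∈ b, f p = f x + ∑ p ∈ b.erase x, f p := by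
    intro b hb
    rw [Finset.mem_filter] at hb
    exact (Finset.add_sum_erase b f hb.2).symm
  rw [Finset.sum_congr rfl h1, Finset.sum_add_distrib, Finset.sum_const]
  congr 1
  rw [← sigma_bij_core hk hlam x f, Finset.sum_sigma]

end Final


/-- A Steiner triple system (a 2-(v,3,1) design) with v ≡ 1 (mod 12)
(and more than three points) is not embeddable in 𝔊_D: the canonical map
P → 𝔊_D is not injective. -/
theorem stmt_5 {α : Type*} [Fintype α] [DecidableEq α]
    (B : Finset (Finset α)) (v : ℕ)
    (hv : Fintype.card α = v)
    (hv3 : 3 < v)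
    (hmod : v % 12 = 1)
    (hk : ∀ b ∈ B, b.card = 3)
    (hlam : ∀ x y : α, x ≠ y → (B.filter (fun b => x ∈ b ∧ y ∈ b)).card = 1)
    (R : AddSubgroup (FreeAbelianGroup α))
    (hR : R = AddSubgroup.closure {g | ∃ b ∈ B, g = ∑ p ∈ b, FreeAbelianGroup.of p}) :
    ¬ Function.Injective (fun X : α =>
      (QuotientAddGroup.mk (FreeAbelianGroup.of X) : FreeAbelianGroup α ⧸ R)) := by
  intro hinj
  have hv13 : 13 ≤ v := by omega
  have hcard : 13 ≤ Fintype.card α := by rw [hv]; exact hv13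
  -- the 6-power torsion subgroup of the quotient
  set T : AddSubgroup (FreeAbelianGroup α ⧸ R) :=
    { carrier := {g | ∃ k : ℕ, (6 ^ k : ℕ) • g = 0}
      zero_mem' := ⟨0, by simp⟩
      add_mem' := by
        rintro a b ⟨k, hka⟩ ⟨l, hlb⟩
        refine ⟨k + l, ?_⟩
        rw [smul_add]
        have h1 : (6 ^ (k + l) : ℕ) • a = (6 ^ l : ℕ) • ((6 ^ k : ℕ) • a) := by
          rw [← mul_smul, ← pow_add]
          ring_nf
        have h2 : (6 ^ (k + l) : ℕ) • b = (6 ^ k : ℕ) • ((6 ^ l : ℕ) • b) := by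
          rw [← mul_smul, ← pow_add]
        rw [h1, h2, hka, hlb, smul_zero, smul_zero, add_zero]
      neg_mem' := by
        rintro a ⟨k, hka⟩
        exact ⟨k, by rw [smul_neg, hka, neg_zero]⟩ } with hT
  have hTmem : ∀ g : FreeAbelianGroup α ⧸ R, g ∈ T ↔ ∃ k : ℕ, (6 ^ k : ℕ) • g = 0 := by
    intro g; rfl
  -- the target group
  have h2A : ∀ x : (FreeAbelianGroup α ⧸ R) ⧸ T, x + x = 0 → x = 0 := by
    intro x
    induction x using QuotientAddGroup.induction_on with
    | H g =>
      intro h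
      have hgg : ((g + g : FreeAbelianGroup α ⧸ R) : (FreeAbelianGroup α ⧸ R) ⧸ T) = 0 := by
        rw [QuotientAddGroup.mk_add]; exact h
      rw [QuotientAddGroup.eq_zero_iff] at hgg ⊢
      obtain ⟨k, hk6⟩ := (hTmem _).mp hgg
      refine (hTmem _).mpr ⟨k + 1, ?_⟩
      have e : (6 : ℕ) ^ (k + 1) = 3 * (6 ^ k * 2) := by ring
      rw [e, mul_smul, mul_smul, two_nsmul, hk6, smul_zero]
  have h3A : ∀ x : (FreeAbelianGroup α ⧸ R) ⧸ T, x + x + x = 0 → x = 0 := by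
    intro x
    induction x using QuotientAddGroup.induction_on with
    | H g =>
      intro h
      have hgg : ((g + g + g : FreeAbelianGroup α ⧸ R) : (FreeAbelianGroup α ⧸ R) ⧸ T) = 0 := by
        rw [QuotientAddGroup.mk_add, QuotientAddGroup.mk_add]; exact h
      rw [QuotientAddGroup.eq_zero_iff] at hgg ⊢
      obtain ⟨k, hk6⟩ := (hTmem _).mp hgg
      refine (hTmem _).mpr ⟨k + 1, ?_⟩
      have e : (6 : ℕ) ^ (k + 1) = 2 * (6 ^ k * 3) := by ring
      have e3 : (3 : ℕ) • g = g + g + g := by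
        rw [succ_nsmul, two_nsmul]
      rw [e, mul_smul, mul_smul, e3, hk6, smul_zero]
  -- the labeling
  set φ : FreeAbelianGroup α →+ (FreeAbelianGroup α ⧸ R) ⧸ T :=
    (QuotientAddGroup.mk' T).comp (QuotientAddGroup.mk' R) with hφ
  set u : α → (FreeAbelianGroup α ⧸ R) ⧸ T := fun p => φ (FreeAbelianGroup.of p) with huDef
  have hu : ∀ b ∈ B, ∑ p ∈ b, u p = 0 := by
    intro b hb
    rw [huDef, ← map_sum]
    have hmem : (∑ p ∈ b, FreeAbelianGroup.of p) ∈ R := by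
      rw [hR]
      exact AddSubgroup.subset_closure ⟨b, hb, rfl⟩
    have hz : (QuotientAddGroup.mk' R) (∑ p ∈ b, FreeAbelianGroup.of p) = 0 :=
      (QuotientAddGroup.eq_zero_iff _).mpr hmem
    rw [hφ, AddMonoidHom.comp_apply, hz, map_zero]
  have hzero : ∀ p, u p = 0 := labeling_zero hk hlam hcard h2A h3A hu
  -- two distinct points
  obtain ⟨x, y, hxy⟩ := Fintype.exists_pair_of_one_lt_card (by omega : 1 < Fintype.card α)
  set d : FreeAbelianGroup α ⧸ R :=
    QuotientAddGroup.mk' R (FreeAbelianGroup.of x - FreeAbelianGroup.of y) with hd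
  -- d is 6-power torsion
  have hdT : d ∈ T := by
    rw [← QuotientAddGroup.eq_zero_iff (N := T)]
    have : (QuotientAddGroup.mk' T) d = φ (FreeAbelianGroup.of x - FreeAbelianGroup.of y) := by
      rw [hφ, AddMonoidHom.comp_apply, hd]
    rw [show ((d : FreeAbelianGroup α ⧸ R) : (FreeAbelianGroup α ⧸ R) ⧸ T)
        = (QuotientAddGroup.mk' T) d from rfl, this, map_sub]
    have hx0 : φ (FreeAbelianGroup.of x) = 0 := hzero x
    have hy0 : φ (FreeAbelianGroup.of y) = 0 := hzero y
    rw [hx0, hy0, sub_zero]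
  obtain ⟨k, hk6⟩ := (hTmem d).mp hdT
  -- the (r-1) relation
  set r : ℕ := (B.filter (fun b => x ∈ b)).card with hr
  have hry : (B.filter (fun b => y ∈ b)).card = r := by
    have h1 := point_degree hk hlam x
    have h2 := point_degree hk hlam y
    omega
  have hSxR : (∑ b ∈ B.filter (fun b => x ∈ b), ∑ p ∈ b, FreeAbelianGroup.of p) ∈ R := by
    apply AddSubgroup.sum_mem
    intro b hb
    rw [Finset.mem_filter] at hb
    rw [hR]
    exact AddSubgroup.subset_closure ⟨b, hb.1, rfl⟩
  have hSyR : (∑ b ∈ B.filter (fun b => y ∈ b), ∑ p ∈ b, FreeAbelianGroup.of p) ∈ R := by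
    apply AddSubgroup.sum_mem
    intro b hb
    rw [Finset.mem_filter] at hb
    rw [hR]
    exact AddSubgroup.subset_closure ⟨b, hb.1, rfl⟩
  have hident : (∑ b ∈ B.filter (fun b => x ∈ b), ∑ p ∈ b, FreeAbelianGroup.of p)
      - (∑ b ∈ B.filter (fun b => y ∈ b), ∑ p ∈ b, FreeAbelianGroup.of p)
      = r • (FreeAbelianGroup.of x - FreeAbelianGroup.of y)
        - (FreeAbelianGroup.of x - FreeAbelianGroup.of y) := by
    rw [sum_blocks_through hk hlam x, sum_blocks_through hk hlam y, hry, ← hr]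
    have hex : ∑ w ∈ univ.erase x, FreeAbelianGroup.of w
        = (∑ w ∈ univ, FreeAbelianGroup.of w) - FreeAbelianGroup.of x := by
      have := Finset.add_sum_erase univ FreeAbelianGroup.of (Finset.mem_univ x)
      linear_combination (norm := abel) this
    have hey : ∑ w ∈ univ.erase y, FreeAbelianGroup.of w
        = (∑ w ∈ univ, FreeAbelianGroup.of w) - FreeAbelianGroup.of y := by
      have := Finset.add_sum_erase univ FreeAbelianGroup.of (Finset.mem_univ y)
      linear_combination (norm := abel) this
    rw [hex, hey, smul_sub]
    abel
  have hrel : r • d - d = 0 := by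
    have hmem : (r • (FreeAbelianGroup.of x - FreeAbelianGroup.of y)
        - (FreeAbelianGroup.of x - FreeAbelianGroup.of y)) ∈ R := by
      rw [← hident]
      exact AddSubgroup.sub_mem R hSxR hSyR
    have h0 : (QuotientAddGroup.mk' R) (r • (FreeAbelianGroup.of x - FreeAbelianGroup.of y)
        - (FreeAbelianGroup.of x - FreeAbelianGroup.of y)) = 0 :=
      (QuotientAddGroup.eq_zero_iff _).mpr hmem
    rw [map_sub, map_nsmul] at h0
    exact h0
  -- r = 6t with t ≥ 1
  obtain ⟨t, ht⟩ : ∃ t, r = 6 * t ∧ 1 ≤ t := by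
    obtain ⟨s, hs⟩ : ∃ s, v = 12 * s + 1 := ⟨v / 12, by omega⟩
    have h1 := point_degree hk hlam x
    rw [hv] at h1
    exact ⟨s, by omega, by omega⟩
  -- m := r - 1, m • d = 0
  have hmd : (6 * t - 1) • d = 0 := by
    have hrw : r • d = (6 * t - 1) • d + 1 • d := by
      rw [← add_nsmul]
      congr 1
      omega
    rw [hrw, one_nsmul] at hrel
    simpa using hrel
  -- coprime
  have hcop : Nat.Coprime (6 * t - 1) (6 ^ k) := by
    have hbase : Nat.Coprime (6 * t - 1) 6 := by
      unfold Nat.Coprime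
      have h5 : (6 * t - 1) % 6 = 5 := by omega
      rw [Nat.gcd_comm, Nat.gcd_rec, h5]
      decide
    exact hbase.pow_right k
  have hiscop : IsCoprime ((6 * t - 1 : ℕ) : ℤ) ((6 ^ k : ℕ) : ℤ) := by
    rw [Int.isCoprime_iff_gcd_eq_one, Int.gcd_natCast_natCast]
    exact hcop
  obtain ⟨c1, c2, hbez⟩ := hiscop
  have hd0 : d = 0 := by
    have hmd' : ((6 * t - 1 : ℕ) : ℤ) • d = 0 := by
      rw [natCast_zsmul]; exact hmd
    have h6' : ((6 ^ k : ℕ) : ℤ) • d = 0 := by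
      rw [natCast_zsmul]; exact hk6
    calc d = (1 : ℤ) • d := (one_zsmul d).symm
      _ = (c1 * ((6 * t - 1 : ℕ) : ℤ) + c2 * ((6 ^ k : ℕ) : ℤ)) • d := by rw [hbez]
      _ = c1 • (((6 * t - 1 : ℕ) : ℤ) • d) + c2 • (((6 ^ k : ℕ) : ℤ) • d) := by
          rw [add_zsmul, mul_zsmul, mul_zsmul]
      _ = 0 := by rw [hmd', h6', smul_zero, smul_zero, add_zero]
  -- contradiction with injectivity
  have heq : (QuotientAddGroup.mk (FreeAbelianGroup.of x) : FreeAbelianGroup α ⧸ R)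
      = QuotientAddGroup.mk (FreeAbelianGroup.of y) := by
    have hsub : (QuotientAddGroup.mk' R) (FreeAbelianGroup.of x)
        - (QuotientAddGroup.mk' R) (FreeAbelianGroup.of y) = 0 := by
      rw [← map_sub]
      exact hd0
    exact sub_eq_zero.mp hsub
  exact hxy (hinj heq)
end

section
/- Let P = 𝔽_2^n (the n-dimensional affine space over the field with two elements, n ≥ 2) and let k = 2m be even with 2 < k < 2^n. Let B be the family of all k-element subsets of P whose elements sum to zero. Then D = (P, B) is a 3-(2^n, k, r₃) design: there is a constant r₃ such that every three pairwise distinct vectors of 𝔽_2^n are contained in exactly r₃ members of B. -/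
/-!
Affine bijections of `𝔽₂ⁿ` map `k`-sets with zero sum to `k`-sets with zero sum when `k` is
even, since a translation by `c` shifts the sum by `k • c = 0`. Any three distinct points of
`𝔽₂ⁿ` are affinely independent, so the affine group is `3`-transitive, and the number of such
sets through three distinct points does not depend on the points.
-/

open Finset

theorem LinearIndependent.exists_linearEquiv_apply_eq {K V ι : Type*} [DivisionRing K]
    [AddCommGroup V] [Module K V] [Finite ι] {v w : ι → V}
    (hv : LinearIndependent K v) (hw : LinearIndependent K w) :
    ∃ g : V ≃ₗ[K] V, ∀ i, g (v i) = w i := by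
  have : FiniteDimensional K (Submodule.span K (Set.range v)) :=
    FiniteDimensional.span_of_finite K (Set.finite_range v)
  obtain ⟨g, hg⟩ := Submodule.exists_linearEquiv_restrict_eq
    (hv.linearCombinationEquiv.symm ≪≫ₗ hw.linearCombinationEquiv)
  refine ⟨g, fun i => ?_⟩
  have hvi : v i ∈ Submodule.span K (Set.range v) := Submodule.subset_span ⟨i, rfl⟩
  have hrepr : hv.linearCombinationEquiv.symm ⟨v i, hvi⟩ = Finsupp.single i 1 :=
    hv.repr_eq_single i _ rfl
  simpa [hrepr] using (hg ⟨v i, hvi⟩).symm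

theorem AffineMap.sum_apply_of_even_card {R V W : Type*} [Ring R] [CharP R 2]
    [AddCommGroup V] [Module R V] [AddCommGroup W] [Module R W] (f : V →ᵃ[R] W)
    {s : Finset V} (hs : Even #s) : ∑ a ∈ s, f a = f.linear (∑ a ∈ s, a) := by
  obtain ⟨m, hm⟩ := hs
  have two_nsmul_eq_zero (w : W) : 2 • w = 0 := by
    rw [← Nat.cast_smul_eq_nsmul R, Nat.cast_ofNat, CharTwo.two_eq_zero, zero_smul]
  rw [f.decomp]
  simp [sum_add_distrib, hm, ← two_mul, mul_nsmul', two_nsmul_eq_zero]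

theorem card_zeroSum_containing_affineEquiv_apply {R V : Type*} [Ring R] [CharP R 2]
    [AddCommGroup V] [Module R V] [Fintype V] [DecidableEq V] (f : V ≃ᵃ[R] V) {k : ℕ}
    (hk : Even k) (x y z : V) :
    #{s : Finset V | #s = k ∧ ∑ w ∈ s, w = 0 ∧ f x ∈ s ∧ f y ∈ s ∧ f z ∈ s} =
      #{s : Finset V | #s = k ∧ ∑ w ∈ s, w = 0 ∧ x ∈ s ∧ y ∈ s ∧ z ∈ s} := by
  refine card_equiv f.toEquiv.finsetCongr.symm fun s => ?_
  simp only [Equiv.finsetCongr_symm, Equiv.finsetCongr_apply, mem_filter_univ, card_map,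
    sum_map, mem_map_equiv, Equiv.coe_toEmbedding, AffineEquiv.coe_symm_toEquiv]
  refine and_congr_right fun hs => and_congr_left fun _ => ?_
  rw [show ∑ a ∈ s, f.symm a = _ from f.symm.toAffineMap.sum_apply_of_even_card (hs ▸ hk)]
  exact (LinearEquiv.map_eq_zero_iff f.symm.linear).symm

namespace ZMod

variable {V : Type*} [AddCommGroup V] [Module (ZMod 2) V]

theorem linearIndependent_sub_of_ne {x y z : V} (hxy : x ≠ y) (hxz : x ≠ z) (hyz : y ≠ z) :
    LinearIndependent (ZMod 2) ![y - x, z - x] := by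
  rw [LinearIndependent.pair_iff' (sub_ne_zero.2 hxy.symm)]
  intro a
  fin_cases a
  · show (0 : ZMod 2) • (y - x) ≠ z - x
    simpa [eq_comm, sub_eq_zero] using hxz
  · show (1 : ZMod 2) • (y - x) ≠ z - x
    simpa using hyz

theorem exists_affineEquiv_apply_eq_of_ne {x y z x' y' z' : V}
    (hxy : x ≠ y) (hxz : x ≠ z) (hyz : y ≠ z) (hxy' : x' ≠ y') (hxz' : x' ≠ z') (hyz' : y' ≠ z') :
    ∃ f : V ≃ᵃ[ZMod 2] V, f x = x' ∧ f y = y' ∧ f z = z' := by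
  obtain ⟨g, hg⟩ := (linearIndependent_sub_of_ne hxy hxz hyz).exists_linearEquiv_apply_eq
    (linearIndependent_sub_of_ne hxy' hxz' hyz')
  have hgy : g y = g x + (y' - x') := by simpa [sub_eq_iff_eq_add'] using hg 0
  have hgz : g z = g x + (z' - x') := by simpa [sub_eq_iff_eq_add'] using hg 1
  refine ⟨g.toAffineEquiv.trans (AffineEquiv.constVAdd (ZMod 2) V (x' - g x)), ?_, ?_, ?_⟩ <;>
    simp [hgy, hgz] <;> abel

end ZMod

theorem stmt_7_general (n : ℕ) (k m : ℕ) (hk : k = 2 * m) :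
    ∃ r3 : ℕ, ∀ x y z : Fin n → ZMod 2, x ≠ y → x ≠ z → y ≠ z →
      (Finset.univ.filter (fun s : Finset (Fin n → ZMod 2) =>
        s.card = k ∧ (∑ w ∈ s, w) = 0 ∧ x ∈ s ∧ y ∈ s ∧ z ∈ s)).card = r3 := by
  by_cases h : ∃ x₀ y₀ z₀ : Fin n → ZMod 2, x₀ ≠ y₀ ∧ x₀ ≠ z₀ ∧ y₀ ≠ z₀
  · obtain ⟨x₀, y₀, z₀, hxy₀, hxz₀, hyz₀⟩ := h
    refine ⟨#{s | #s = k ∧ ∑ w ∈ s, w = 0 ∧ x₀ ∈ s ∧ y₀ ∈ s ∧ z₀ ∈ s},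
      fun x y z hxy hxz hyz => ?_⟩
    obtain ⟨f, rfl, rfl, rfl⟩ := ZMod.exists_affineEquiv_apply_eq_of_ne hxy₀ hxz₀ hyz₀ hxy hxz hyz
    exact card_zeroSum_containing_affineEquiv_apply f ⟨m, by omega⟩ x₀ y₀ z₀
  · exact ⟨0, fun x y z hxy hxz hyz => (h ⟨x, y, z, hxy, hxz, hyz⟩).elim⟩

/-- Let P = 𝔽₂ⁿ (n ≥ 2) and let k = 2m be even with 2 < k < 2ⁿ.
The family B of k-subsets of 𝔽₂ⁿ with zero sum is a 3-(2ⁿ,k,r₃) design: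
every three pairwise distinct vectors lie in exactly r₃ members of B. -/
theorem stmt_7 (n : ℕ) (hn : 2 ≤ n) (k m : ℕ) (hk : k = 2 * m)
    (h2 : 2 < k) (hlt : k < 2 ^ n) :
    ∃ r3 : ℕ, ∀ x y z : Fin n → ZMod 2, x ≠ y → x ≠ z → y ≠ z →
      (Finset.univ.filter (fun s : Finset (Fin n → ZMod 2) =>
        s.card = k ∧ (∑ w ∈ s, w) = 0 ∧ x ∈ s ∧ y ∈ s ∧ z ∈ s)).card = r3 :=
  stmt_7_general n k m hk
end

section
/- Let n ≥ 2, let P be the set of the 2^n − 1 non-zero vectors of 𝔽_2^n, and for 2 ≤ k ≤ 2^n − 2 let B_k be the family of all k-element subsets of P whose elements sum to zero. Then D_k = (P, B_k) is a 2-(2^n − 1, k, λ_k) design: there is a constant λ_k such that every pair of distinct non-zero vectors is contained in exactly λ_k members of B_k. -/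
/-!
Over 𝔽₂ the only non-zero scalar is 1, so the points of the projective space ℙ(V) are exactly
the non-zero vectors of V, and the 2-transitivity of GL(V) on ℙ(V) says that any pair of distinct
non-zero vectors can be moved to any other by a linear automorphism. Such an automorphism maps
zero-sum k-subsets of V ∖ {0} bijectively onto zero-sum k-subsets of V ∖ {0}, so the number of
blocks through a pair does not depend on the pair.
-/

open Finset

namespace Projectivization

theorem mk_eq_mk_iff_of_zmod_two {V : Type*} [AddCommGroup V] [Module (ZMod 2) V] {v w : V}
    (hv : v ≠ 0) (hw : w ≠ 0) : mk (ZMod 2) v hv = mk (ZMod 2) w hw ↔ v = w := by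
  rw [mk_eq_mk_iff']
  constructor
  · rintro ⟨a, rfl⟩
    fin_cases a
    · exact absurd (zero_smul _ w) hv
    · exact one_smul _ w
  · rintro rfl
    exact ⟨1, one_smul _ v⟩

end Projectivization

open Projectivization in
theorem exists_linearEquiv_apply_eq_apply_eq_of_zmod_two {V : Type*} [AddCommGroup V]
    [Module (ZMod 2) V] {x y x' y' : V} (hx : x ≠ 0) (hy : y ≠ 0) (hxy : x ≠ y)
    (hx' : x' ≠ 0) (hy' : y' ≠ 0) (hxy' : x' ≠ y') :
    ∃ g : V ≃ₗ[ZMod 2] V, g x = x' ∧ g y = y' := by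
  have hne : mk (ZMod 2) x hx ≠ mk (ZMod 2) y hy := by rwa [Ne, mk_eq_mk_iff_of_zmod_two]
  have hne' : mk (ZMod 2) x' hx' ≠ mk (ZMod 2) y' hy' := by rwa [Ne, mk_eq_mk_iff_of_zmod_two]
  obtain ⟨g, hgx, hgy⟩ := MulAction.is_two_pretransitive_iff.mp
    (linearEquiv_is_two_pretransitive (ZMod 2) V) hne hne'
  simp only [smul_mk, mk_eq_mk_iff_of_zmod_two] at hgx hgy
  exact ⟨g, hgx, hgy⟩

section ZeroSumBlocks

variable {G : Type*} [AddCommGroup G] [Fintype G] [DecidableEq G]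

def zeroSumBlocksThrough (k : ℕ) (x y : G) : Finset (Finset G) :=
  univ.filter fun s => (∀ w ∈ s, w ≠ 0) ∧ s.card = k ∧ ∑ w ∈ s, w = 0 ∧ x ∈ s ∧ y ∈ s

theorem card_zeroSumBlocksThrough_addEquiv (f : G ≃+ G) (k : ℕ) (x y : G) :
    #(zeroSumBlocksThrough k (f x) (f y)) = #(zeroSumBlocksThrough k x y) := by
  symm
  refine card_equiv (Equiv.finsetCongr f.toEquiv) fun s => ?_
  have hsum : ∑ w ∈ s, f w = 0 ↔ ∑ w ∈ s, w = 0 := by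
    rw [← map_sum, AddEquivClass.map_eq_zero_iff]
  simp [zeroSumBlocksThrough, hsum]

theorem exists_card_zeroSumBlocksThrough_eq [Module (ZMod 2) G] (k : ℕ) :
    ∃ lam : ℕ, ∀ x y : G, x ≠ 0 → y ≠ 0 → x ≠ y → #(zeroSumBlocksThrough k x y) = lam := by
  by_cases h : ∃ x₀ y₀ : G, x₀ ≠ 0 ∧ y₀ ≠ 0 ∧ x₀ ≠ y₀
  · obtain ⟨x₀, y₀, hx₀, hy₀, hxy₀⟩ := h
    refine ⟨#(zeroSumBlocksThrough k x₀ y₀), fun x y hx hy hxy => ?_⟩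
    obtain ⟨g, rfl, rfl⟩ := exists_linearEquiv_apply_eq_apply_eq_of_zmod_two hx₀ hy₀ hxy₀ hx hy hxy
    exact card_zeroSumBlocksThrough_addEquiv g.toAddEquiv k x₀ y₀
  · exact ⟨0, fun x y hx hy hxy => (h ⟨x, y, hx, hy, hxy⟩).elim⟩

end ZeroSumBlocks

theorem stmt_9_general (n : ℕ) (k : ℕ) :
    ∃ lam : ℕ, ∀ x y : Fin n → ZMod 2, x ≠ 0 → y ≠ 0 → x ≠ y →
      (Finset.univ.filter (fun s : Finset (Fin n → ZMod 2) =>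
        (∀ w ∈ s, w ≠ 0) ∧ s.card = k ∧ (∑ w ∈ s, w) = 0 ∧
        x ∈ s ∧ y ∈ s)).card = lam :=
  exists_card_zeroSumBlocksThrough_eq k

/-- Let P be the set of non-zero vectors of 𝔽₂ⁿ (n ≥ 2) and, for
2 ≤ k ≤ 2ⁿ − 2, let B_k be the family of k-subsets of P with zero sum. Then
D_k = (P, B_k) is a 2-(2ⁿ−1, k, λ_k) design: every pair of distinct non-zero
vectors lies in exactly λ_k members of B_k. -/
theorem stmt_9 (n : ℕ) (hn : 2 ≤ n) (k : ℕ) (hk2 : 2 ≤ k) (hk : k ≤ 2 ^ n - 2) :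
    ∃ lam : ℕ, ∀ x y : Fin n → ZMod 2, x ≠ 0 → y ≠ 0 → x ≠ y →
      (Finset.univ.filter (fun s : Finset (Fin n → ZMod 2) =>
        (∀ w ∈ s, w ≠ 0) ∧ s.card = k ∧ (∑ w ∈ s, w) = 0 ∧
        x ∈ s ∧ y ∈ s)).card = lam :=
  stmt_9_general n k
end

section
/- Let n ≥ 2, let P be the set of the v = 2^n − 1 non-zero vectors of 𝔽_2^n, and for each k let b_k denote the number of k-element subsets of P whose elements sum to zero. Then for 2 ≤ k ≤ v − 1 one has (k+1)·b_{k+1} + b_k + (v − k + 1)·b_{k−1} = C(v, k), where C(v,k) is the binomial coefficient. -/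
/-!
Sort the `k`-subsets `s` of `P = V ∖ {0}` by their sum `σ = ∑ s`. If `σ = 0`, `s` is counted
by `b k`. If `σ ∈ s`, removing `σ` leaves a zero-sum `(k-1)`-subset `T`, and `s = T ∪ {σ}` with
`σ ∈ P ∖ T` arbitrary, so there are `(v - k + 1) b (k-1)` of these. If `σ ∉ s ∪ {0}`, adding `σ`
gives a zero-sum `(k+1)`-subset, since `σ + σ = 0`, and each of those arises from each of its
`k + 1` elements, giving `(k + 1) b (k+1)`. The three counts add up to `C(v, k)`.
-/

open Finset

variable (V : Type*) [AddCommGroup V] [Fintype V] [DecidableEq V]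

def zeroSumSubsets (j : ℕ) : Finset (Finset V) :=
  univ.filter fun s => (∀ w ∈ s, w ≠ 0) ∧ s.card = j ∧ ∑ w ∈ s, w = 0

variable {V}

lemma mem_zeroSumSubsets {j : ℕ} {s : Finset V} :
    s ∈ zeroSumSubsets V j ↔ s ∈ (univ.erase 0).powersetCard j ∧ ∑ w ∈ s, w = 0 := by
  simp [zeroSumSubsets, mem_powersetCard, subset_iff, and_assoc]

lemma card_filter_sum_mem (k : ℕ) :
    ((univ.erase (0 : V)).powersetCard (k + 1) |>.filter fun s => ∑ w ∈ s, w ∈ s).card =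
      (Fintype.card V - 1 - k) * (zeroSumSubsets V k).card := by
  have hbij : ((univ.erase (0 : V)).powersetCard (k + 1) |>.filter fun s => ∑ w ∈ s, w ∈ s).card =
      ((zeroSumSubsets V k).sigma fun T => univ.erase 0 \ T).card := by
    apply card_nbij' (fun s => ⟨s.erase (∑ w ∈ s, w), ∑ w ∈ s, w⟩) (fun p => insert p.2 p.1)
    · intro s hs
      simp only [mem_coe, mem_filter, mem_powersetCard] at hs
      obtain ⟨⟨hsP, hcard⟩, hσs⟩ := hs
      simp only [coe_sigma, Set.mem_sigma_iff, mem_coe, mem_zeroSumSubsets, mem_powersetCard,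
        mem_sdiff, sum_erase_eq_sub hσs, sub_self, and_true, notMem_erase, not_false_eq_true]
      exact ⟨⟨(erase_subset _ _).trans hsP, by rw [card_erase_of_mem hσs, hcard]; rfl⟩, hsP hσs⟩
    · rintro ⟨T, x⟩ hp
      simp only [coe_sigma, Set.mem_sigma_iff, mem_coe, mem_zeroSumSubsets, mem_powersetCard,
        mem_sdiff] at hp
      obtain ⟨⟨⟨hTP, hTcard⟩, hTsum⟩, hxP, hxT⟩ := hp
      simp only [mem_coe, mem_filter, mem_powersetCard, sum_insert hxT, hTsum, add_zero,
        mem_insert_self, and_true, card_insert_of_notMem hxT, hTcard]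
      exact insert_subset hxP hTP
    · intro s hs
      simp only [mem_coe, mem_filter] at hs
      exact insert_erase hs.2
    · rintro ⟨T, x⟩ hp
      simp only [coe_sigma, Set.mem_sigma_iff, mem_coe, mem_zeroSumSubsets, mem_sdiff] at hp
      simp only [sum_insert hp.2.2, hp.1.2, add_zero, erase_insert hp.2.2]
  rw [hbij, card_sigma, mul_comm, ← smul_eq_mul, ← sum_const]
  refine sum_congr rfl fun T hT => ?_
  obtain ⟨hT, -⟩ := mem_zeroSumSubsets.1 hT
  rw [mem_powersetCard] at hT
  rw [card_sdiff_of_subset hT.1, hT.2, card_erase_of_mem (mem_univ _), card_univ]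

lemma card_filter_sum_notMem_insert_zero (hV : ∀ x : V, x + x = 0) (k : ℕ) :
    ((univ.erase (0 : V)).powersetCard k |>.filter fun s => ∑ w ∈ s, w ∉ insert 0 s).card =
      (k + 1) * (zeroSumSubsets V (k + 1)).card := by
  have sum_erase_of_sum_eq_zero {U : Finset V} {u : V} (hU : ∑ w ∈ U, w = 0) (hu : u ∈ U) :
      ∑ w ∈ U.erase u, w = u := by
    rw [sum_erase_eq_sub hu, hU, zero_sub, neg_eq_iff_add_eq_zero, hV]
  have hbij : ((univ.erase (0 : V)).powersetCard k |>.filter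
      fun s => ∑ w ∈ s, w ∉ insert 0 s).card = ((zeroSumSubsets V (k + 1)).sigma id).card := by
    apply card_nbij' (fun s => ⟨insert (∑ w ∈ s, w) s, ∑ w ∈ s, w⟩) (fun p => p.1.erase p.2)
    · intro s hs
      simp only [mem_coe, mem_filter, mem_powersetCard, mem_insert, not_or] at hs
      obtain ⟨⟨hsP, hcard⟩, hσ0, hσs⟩ := hs
      simp only [coe_sigma, Set.mem_sigma_iff, mem_coe, mem_zeroSumSubsets, mem_powersetCard,
        id, mem_insert_self, and_true, sum_insert hσs, hV, card_insert_of_notMem hσs, hcard]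
      exact insert_subset (mem_erase.2 ⟨hσ0, mem_univ _⟩) hsP
    · rintro ⟨U, u⟩ hp
      simp only [coe_sigma, Set.mem_sigma_iff, mem_coe, mem_zeroSumSubsets, mem_powersetCard,
        id] at hp
      obtain ⟨⟨⟨hUP, hUcard⟩, hUsum⟩, huU⟩ := hp
      simp only [mem_coe, mem_filter, mem_powersetCard, sum_erase_of_sum_eq_zero hUsum huU,
        mem_insert, not_or, notMem_erase, not_false_eq_true, and_true, card_erase_of_mem huU, hUcard,
        add_tsub_cancel_right]
      exact ⟨(erase_subset _ _).trans hUP, (mem_erase.1 (hUP huU)).1⟩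
    · intro s hs
      simp only [mem_coe, mem_filter, mem_insert, not_or] at hs
      exact erase_insert hs.2.2
    · rintro ⟨U, u⟩ hp
      simp only [coe_sigma, Set.mem_sigma_iff, mem_coe, mem_zeroSumSubsets, id] at hp
      simp only [sum_erase_of_sum_eq_zero hp.1.2 hp.2, insert_erase hp.2]
  rw [hbij, card_sigma, mul_comm, ← smul_eq_mul, ← sum_const]
  refine sum_congr rfl fun U hU => ?_
  exact (mem_powersetCard.1 (mem_zeroSumSubsets.1 hU).1).2

theorem card_zeroSumSubsets_recurrence (hV : ∀ x : V, x + x = 0) (k : ℕ) :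
    (k + 2) * (zeroSumSubsets V (k + 2)).card + (zeroSumSubsets V (k + 1)).card
      + (Fintype.card V - 1 - k) * (zeroSumSubsets V k).card
      = (Fintype.card V - 1).choose (k + 1) := by
  set A := (univ.erase (0 : V)).powersetCard (k + 1)
  have hA0 : ∀ s ∈ A, (0 : V) ∉ s := fun s hs h0 =>
    (mem_erase.1 (mem_powersetCard.1 hs |>.1 h0)).1 rfl
  have hzero : (A.filter fun s => ∑ w ∈ s, w = 0) = zeroSumSubsets V (k + 1) := by
    ext s
    rw [mem_filter, mem_zeroSumSubsets]
  have hnotMem : (A.filter fun s => ∑ w ∈ s, w ∉ s) =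
      (A.filter fun s => ∑ w ∈ s, w = 0) ∪ A.filter fun s => ∑ w ∈ s, w ∉ insert 0 s := by
    ext s
    simp only [mem_filter, mem_union, mem_insert, not_or]
    constructor
    · rintro ⟨hs, hσs⟩
      by_cases hσ : ∑ w ∈ s, w = 0 <;> simp_all
    · rintro (⟨hs, hσ⟩ | ⟨hs, -, hσs⟩)
      · exact ⟨hs, hσ ▸ hA0 s hs⟩
      · exact ⟨hs, hσs⟩
  have hdisj : Disjoint (A.filter fun s => ∑ w ∈ s, w = 0)
      (A.filter fun s => ∑ w ∈ s, w ∉ insert 0 s) :=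
    disjoint_filter.2 fun s _ hσ hσs => hσs (hσ ▸ mem_insert_self 0 s)
  have hsplit := card_filter_add_card_filter_not (s := A) (fun s => ∑ w ∈ s, w ∈ s)
  rw [hnotMem, card_union_of_disjoint hdisj, hzero, card_filter_sum_mem,
    card_filter_sum_notMem_insert_zero hV, card_powersetCard, card_erase_of_mem (mem_univ _),
    card_univ] at hsplit
  rw [← hsplit]
  ring

theorem stmt_10_general (n : ℕ) (k : ℕ) (hk2 : 2 ≤ k)
    (hkv : k ≤ 2 ^ n - 1 - 1)
    (b : ℕ → ℕ)
    (hb : ∀ j, b j = (Finset.univ.filter (fun s : Finset (Fin n → ZMod 2) =>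
      (∀ w ∈ s, w ≠ 0) ∧ s.card = j ∧ (∑ w ∈ s, w) = 0)).card) :
    (k + 1) * b (k + 1) + b k + (2 ^ n - 1 - k + 1) * b (k - 1) =
      Nat.choose (2 ^ n - 1) k := by
  have h := card_zeroSumSubsets_recurrence (V := Fin n → ZMod 2)
    (fun x => funext fun i => CharTwo.add_self_eq_zero (x i)) (k - 1)
  have hcard : Fintype.card (Fin n → ZMod 2) = 2 ^ n := by simp
  rw [hcard, show k - 1 + 2 = k + 1 by omega, show k - 1 + 1 = k by omega,
    show 2 ^ n - 1 - (k - 1) = 2 ^ n - 1 - k + 1 by omega] at h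
  simp only [hb]
  exact h

/-- Let P be the set of the v = 2ⁿ − 1 non-zero vectors of 𝔽₂ⁿ
(n ≥ 2) and let b_k be the number of k-subsets of P with zero sum. Then for
2 ≤ k ≤ v − 1 one has (k+1)·b_{k+1} + b_k + (v−k+1)·b_{k−1} = C(v,k). -/
theorem stmt_10 (n : ℕ) (hn : 2 ≤ n) (k : ℕ) (hk2 : 2 ≤ k)
    (hkv : k ≤ 2 ^ n - 1 - 1)
    (b : ℕ → ℕ)
    (hb : ∀ j, b j = (Finset.univ.filter (fun s : Finset (Fin n → ZMod 2) =>
      (∀ w ∈ s, w ≠ 0) ∧ s.card = j ∧ (∑ w ∈ s, w) = 0)).card) :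
    (k + 1) * b (k + 1) + b k + (2 ^ n - 1 - k + 1) * b (k - 1) =
      Nat.choose (2 ^ n - 1) k :=
  stmt_10_general n k hk2 hkv b hb
end

section
/- Let P be the set of non-zero vectors of 𝔽_2^n and let B_k (for 3 ≤ k ≤ 2^n − 2, k ≤ n+1) be the family of k-element subsets of P summing to zero. Let e_1, …, e_n be the canonical basis of 𝔽_2^n and put 𝔠_k = {e_1, …, e_{k−1}, e_1 + e_2 + ⋯ + e_{k−1}}. Then a block 𝔟 ∈ B_k is irreducible (i.e., not reducible) if and only if 𝔟 lies in the orbit of 𝔠_k under the natural action of GL_n(𝔽_2), i.e., there exists an invertible linear map g of 𝔽_2^n with g(𝔠_k) = 𝔟. -/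
/-!
Over `𝔽₂` a linear relation is nothing but a zero-sum subset, so a zero-sum set `𝔟` is
irreducible exactly when removing any one vector `v` leaves a linearly independent set `s`, and
then `v = ∑ s`. Extending `s` to a basis gives `g ∈ GL_n(𝔽₂)` with `g(𝔠_k) = 𝔟`. Conversely, if
`s` is independent, a zero-sum subset of `s ∪ {∑ s}` either avoids `∑ s`, and is then empty, or
contains it, and then its complement in `s` sums to zero, hence is empty.
-/

open Finset Module

theorem exists_basis_apply_eq {K V ι κ : Type*} [DivisionRing K] [AddCommGroup V] [Module K V]
    [FiniteDimensional K V] [Finite κ] {f : ι → V} (hf : LinearIndependent K f) {j : ι → κ}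
    (hj : Function.Injective j) (hκ : Nat.card κ = finrank K V) :
    ∃ B : Basis κ K V, ∀ i, B (j i) = f i := by
  have : Finite ι := Finite.of_injective j hj
  let B₀ := Basis.extend hf.linearIndepOn_id
  have hf_mem : ∀ i, f i ∈ hf.linearIndepOn_id.extend (Set.subset_univ _) := fun i =>
    hf.linearIndepOn_id.subset_extend _ (Set.mem_range_self i)
  have : Finite (hf.linearIndepOn_id.extend (Set.subset_univ _)) := Module.Finite.finite_basis B₀
  obtain ⟨e⟩ := Finite.card_eq.1 (hκ.trans (finrank_eq_nat_card_basis B₀))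
  obtain ⟨σ, hσ⟩ := Equiv.Perm.exists_extending_pair (e ∘ j) (fun i => ⟨f i, hf_mem i⟩)
    (e.injective.comp hj) fun i i' h => hf.injective (congrArg Subtype.val h)
  refine ⟨B₀.reindex (e.trans σ).symm, fun i => ?_⟩
  simpa [B₀] using congrArg Subtype.val (hσ i)

def Finset.IsIrreducible {V : Type*} [AddCommMonoid V] (b : Finset V) : Prop :=
  ¬ ∃ s : Finset V, s ⊂ b ∧ s.Nonempty ∧ ∑ x ∈ s, x = 0

/-- For `f = (e₁, …, e_{k-1})` this is the paper's `𝔠_k`. -/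
def valuesWithSum {ι V : Type*} [Fintype ι] [AddCommMonoid V] [DecidableEq V] (f : ι → V) :
    Finset V :=
  univ.image f ∪ {∑ i, f i}

theorem image_valuesWithSum {ι V W F : Type*} [Fintype ι] [AddCommMonoid V] [AddCommMonoid W]
    [DecidableEq V] [DecidableEq W] [FunLike F V W] [AddMonoidHomClass F V W] (g : F)
    (f : ι → V) : (valuesWithSum f).image g = valuesWithSum (g ∘ f) := by
  simp [valuesWithSum, image_image, map_sum]

section ZModTwo

variable {ι V : Type*} [AddCommGroup V] [Module (ZMod 2) V]

theorem ZModModule.linearIndepOn_finset_iff_sum_ne_zero {v : ι → V} {s : Finset ι} :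
    LinearIndepOn (ZMod 2) v s ↔ ∀ t ⊆ s, t.Nonempty → ∑ i ∈ t, v i ≠ 0 := by
  classical
  rw [linearIndepOn_finset_iff]
  constructor
  · rintro h t hts ⟨i, hi⟩ hsum
    have := h (fun j => if j ∈ t then 1 else 0) ?_ i (hts hi)
    · simp [hi] at this
    · simp [ite_smul, sum_ite_mem, inter_eq_right.2 hts, hsum]
  · intro h c hc i hi
    by_contra hci
    refine h (s.filter (c · ≠ 0)) (filter_subset _ _) ⟨i, mem_filter.2 ⟨hi, hci⟩⟩ ?_
    rw [← hc, sum_filter]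
    refine sum_congr rfl fun j _ => ?_
    obtain h | h : c j = 0 ∨ c j = 1 := by generalize c j = a; revert a; decide
    all_goals simp [h]

theorem ZModModule.sum_erase_eq_of_sum_eq_zero [DecidableEq V] {s : Finset V}
    (hs : ∑ x ∈ s, x = 0) {v : V} (hv : v ∈ s) : ∑ x ∈ s.erase v, x = v := by
  rw [← neg_eq_of_add_eq_zero_right ((add_sum_erase s (fun x => x) hv).trans hs), neg_eq_self]

theorem Finset.isIrreducible_insert_sum [DecidableEq V] {s : Finset V}
    (hs : LinearIndepOn (ZMod 2) id (s : Set V)) : (insert (∑ x ∈ s, x) s).IsIrreducible := by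
  simp only [ZModModule.linearIndepOn_finset_iff_sum_ne_zero, id] at hs
  rintro ⟨u, hu, hne, hsum⟩
  by_cases hT : ∑ x ∈ s, x ∈ u
  · have hu' : u.erase (∑ x ∈ s, x) ⊆ s := subset_insert_iff.1 hu.subset
    have hrest : s \ u.erase (∑ x ∈ s, x) = ∅ := by
      by_contra hrest
      refine hs _ sdiff_subset (nonempty_iff_ne_empty.2 hrest) ?_
      rw [sum_sdiff_eq_sub hu', ZModModule.sum_erase_eq_of_sum_eq_zero hsum hT, sub_self]
    refine hu.not_subset ?_
    rw [← insert_erase hT]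
    exact insert_subset_insert _ (sdiff_eq_empty_iff_subset.1 hrest)
  · exact hs u ((subset_insert_iff_of_notMem hT).1 hu.subset) hne hsum

theorem LinearIndependent.isIrreducible_valuesWithSum [Fintype ι] [DecidableEq V] {f : ι → V}
    (hf : LinearIndependent (ZMod 2) f) : (valuesWithSum f).IsIrreducible := by
  have hsum : ∑ x ∈ univ.image f, x = ∑ i, f i := sum_image fun i _ i' _ h => hf.injective h
  rw [valuesWithSum, union_comm, ← insert_eq, ← hsum]
  exact isIrreducible_insert_sum (by simpa using hf.linearIndepOn_id)

theorem Finset.IsIrreducible.linearIndepOn_erase [DecidableEq V] {b : Finset V}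
    (hb : b.IsIrreducible) {v : V} (hv : v ∈ b) :
    LinearIndepOn (ZMod 2) id ((b.erase v : Finset V) : Set V) := by
  rw [ZModModule.linearIndepOn_finset_iff_sum_ne_zero]
  intro t ht hne hsum
  exact hb ⟨t, ssubset_of_subset_of_ssubset ht (erase_ssubset hv), hne, hsum⟩

theorem Finset.IsIrreducible.exists_eq_valuesWithSum [DecidableEq V] {b : Finset V} {m : ℕ}
    (hb : b.IsIrreducible) (hsum : ∑ x ∈ b, x = 0) (hcard : b.card = m + 1) :
    ∃ f : Fin m → V, LinearIndependent (ZMod 2) f ∧ valuesWithSum f = b := by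
  obtain ⟨v, hv⟩ : b.Nonempty := card_pos.1 (by omega)
  let e := (b.erase v).equivFinOfCardEq (by rw [card_erase_of_mem hv, hcard, Nat.add_sub_cancel])
  refine ⟨fun i => e.symm i, (hb.linearIndepOn_erase hv).comp _ e.symm.injective, ?_⟩
  have himage : univ.image (fun i => (e.symm i : V)) = b.erase v := by
    ext x
    simp only [mem_image, mem_univ, true_and]
    exact ⟨by rintro ⟨i, rfl⟩; exact (e.symm i).2, fun hx => ⟨e ⟨x, hx⟩, by simp⟩⟩
  have hsum_erase : ∑ i, (e.symm i : V) = v :=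
    (e.symm.sum_comp (fun x => (x : V))).trans
      ((sum_coe_sort _ _).trans (ZModModule.sum_erase_eq_of_sum_eq_zero hsum hv))
  rw [valuesWithSum, himage, hsum_erase, union_comm, ← insert_eq, insert_erase hv]

end ZModTwo

/-- Let P be the set of non-zero vectors of 𝔽₂ⁿ and, for
3 ≤ k ≤ 2ⁿ − 2 with k ≤ n + 1, let 𝔟 be a zero-sum k-subset of P (a block of
B_k). With e₁,…,e_n the canonical basis and
𝔠_k = {e₁,…,e_{k−1}, e₁ + ⋯ + e_{k−1}}, the block 𝔟 is irreducible (it has no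
nonempty proper zero-sum subset) iff 𝔟 = g(𝔠_k) for some g ∈ GL_n(𝔽₂). -/
theorem stmt_11 (n k : ℕ) (hk3 : 3 ≤ k) (hkn : k ≤ n + 1)
    (b : Finset (Fin n → ZMod 2))
    (hbcard : b.card = k) (hbsum : (∑ x ∈ b, x) = 0) :
    (¬ ∃ s : Finset (Fin n → ZMod 2), s ⊂ b ∧ s.Nonempty ∧ (∑ x ∈ s, x) = 0) ↔
    ∃ g : (Fin n → ZMod 2) ≃ₗ[ZMod 2] (Fin n → ZMod 2),
      Finset.image g
        ((Finset.univ.image (fun i : Fin (k - 1) =>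
            (Pi.single (Fin.castLE (by omega) i) 1 : Fin n → ZMod 2))) ∪
          {∑ i : Fin (k - 1),
            (Pi.single (Fin.castLE (by omega) i) 1 : Fin n → ZMod 2)}) = b := by
  have hm : k - 1 ≤ n := by omega
  change b.IsIrreducible ↔ ∃ g : (Fin n → ZMod 2) ≃ₗ[ZMod 2] (Fin n → ZMod 2),
    (valuesWithSum fun i : Fin (k - 1) =>
      (Pi.single (Fin.castLE hm i) 1 : Fin n → ZMod 2)).image g = b
  simp_rw [image_valuesWithSum]
  constructor
  · intro hb
    obtain ⟨f, hf, rfl⟩ := hb.exists_eq_valuesWithSum hbsum (by omega : b.card = k - 1 + 1)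
    obtain ⟨B, hB⟩ := exists_basis_apply_eq hf (Fin.castLE_injective hm) (by simp)
    exact ⟨B.equivFun.symm, congrArg valuesWithSum (funext fun i => by simp [hB])⟩
  · rintro ⟨g, rfl⟩
    have hind : LinearIndependent (ZMod 2)
        (g ∘ fun i : Fin (k - 1) => (Pi.single (Fin.castLE hm i) 1 : Fin n → ZMod 2)) := by
      convert ((Pi.basisFun (ZMod 2) (Fin n)).map g).linearIndependent.comp _
        (Fin.castLE_injective hm) using 1
      ext1 i
      simp
    exact hind.isIrreducible_valuesWithSum
end

section
/- Let P be the set of non-zero vectors of 𝔽_2^n and let 𝔟 = {P_1, …, P_{k−1}, P_k} be a k-element subset of P whose elements sum to zero (so P_k = P_1 + ⋯ + P_{k−1}), with k ≥ 3. Then 𝔟 is irreducible if and only if the vectors P_1, …, P_{k−1} are linearly independent over 𝔽_2 (equivalently, every (k−1)-element subset of 𝔟 is linearly independent). -/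
lemma zmod2_ne_zero {a : ZMod 2} (h : a ≠ 0) : a = 1 := by
  revert h; revert a; decide

/-- Let 𝔟 = {P₁,…,P_k} (k ≥ 3) be a k-subset of non-zero vectors
of 𝔽₂ⁿ whose elements sum to zero (so the last point is the sum of the first
k−1). Then 𝔟 is irreducible (no nonempty proper zero-sum subset) iff
P₁,…,P_{k−1} are linearly independent over 𝔽₂. -/
theorem stmt_12 (n k : ℕ) (hk : 3 ≤ k)
    (P : Fin k → (Fin n → ZMod 2)) (hinj : Function.Injective P)
    (h0 : ∀ i, P i ≠ 0) (hsum : (∑ i, P i) = 0) :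
    (¬ ∃ s : Finset (Fin n → ZMod 2),
        s ⊂ Finset.image P Finset.univ ∧ s.Nonempty ∧ (∑ x ∈ s, x) = 0) ↔
    LinearIndependent (ZMod 2) (fun i : Fin (k - 1) => P (Fin.castLE (by omega) i)) := by
  have hcast : ∀ i : Fin (k - 1), (Fin.castLE (by omega : k - 1 ≤ k) i).val < k - 1 := by
    intro i; simp
  have hcinj : Function.Injective (Fin.castLE (by omega : k - 1 ≤ k)) :=
    Fin.castLE_injective _
  constructor
  · intro hirr
    rw [Fintype.linearIndependent_iff]
    intro g hg
    by_contra hne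
    push_neg at hne
    obtain ⟨i0, hi0⟩ := hne
    apply hirr
    refine ⟨(Finset.univ.filter (fun i => g i ≠ 0)).image
        (fun i => P (Fin.castLE (by omega) i)), ⟨?_, ?_⟩, ?_, ?_⟩
    · intro x hx
      simp only [Finset.mem_image, Finset.mem_filter, Finset.mem_univ, true_and] at hx ⊢
      obtain ⟨i, _, rfl⟩ := hx
      exact ⟨_, rfl⟩
    · intro hsub
      have hmem : P ⟨k - 1, by omega⟩ ∈ (Finset.univ.filter (fun i => g i ≠ 0)).image
          (fun i => P (Fin.castLE (by omega) i)) := by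
        apply hsub
        simp only [Finset.mem_image, Finset.mem_univ, true_and]
        exact ⟨⟨k - 1, by omega⟩, rfl⟩
      simp only [Finset.mem_image, Finset.mem_filter, Finset.mem_univ, true_and] at hmem
      obtain ⟨i, _, hPi⟩ := hmem
      have := congrArg Fin.val (hinj hPi)
      have hi := hcast i
      simp only [Fin.coe_castLE] at this
      omega
    · exact ⟨_, Finset.mem_image.2 ⟨i0, by simp [hi0], rfl⟩⟩
    · rw [Finset.sum_image (fun a _ b _ h => hcinj (hinj h))]
      rw [← hg, Finset.sum_filter]
      apply Finset.sum_congr rfl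
      intro i _
      by_cases h : g i = 0
      · simp [h]
      · simp [h, zmod2_ne_zero h]
  · intro hLI
    rintro ⟨s, hss, hsne, hs0⟩
    rw [Fintype.linearIndependent_iff] at hLI
    set last : Fin k := ⟨k - 1, by omega⟩ with hlastdef
    set T : Finset (Fin k) := Finset.univ.filter (fun i => P i ∈ s) with hTdef
    have hsimg : s = T.image P := by
      apply Finset.ext
      intro x
      simp only [Finset.mem_image, Finset.mem_filter, Finset.mem_univ, true_and, hTdef]
      constructor
      · intro hx
        have := hss.1 hx
        simp only [Finset.mem_image, Finset.mem_univ, true_and] at this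
        obtain ⟨i, rfl⟩ := this
        exact ⟨i, hx, rfl⟩
      · rintro ⟨i, hi, rfl⟩; exact hi
    have hTsum : ∑ i ∈ T, P i = 0 := by
      rw [hsimg] at hs0
      rwa [Finset.sum_image (fun a _ b _ h => hinj h)] at hs0
    have hTne : T.Nonempty := by
      obtain ⟨x, hx⟩ := hsne
      rw [hsimg] at hx
      obtain ⟨i, hi, _⟩ := Finset.mem_image.1 hx
      exact ⟨i, hi⟩
    have hTcne : Tᶜ.Nonempty := by
      obtain ⟨x, hx, hxs⟩ := Finset.exists_of_ssubset hss
      simp only [Finset.mem_image, Finset.mem_univ, true_and] at hx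
      obtain ⟨i, rfl⟩ := hx
      exact ⟨i, by simp [hTdef, hxs]⟩
    have hTcsum : ∑ i ∈ Tᶜ, P i = 0 := by
      have := Finset.sum_add_sum_compl T P
      rw [hTsum, hsum, zero_add] at this
      exact this
    -- choose T' with last ∉ T'
    obtain ⟨T', hT'last, hT'sum, hT'ne⟩ :
        ∃ T' : Finset (Fin k), last ∉ T' ∧ (∑ i ∈ T', P i) = 0 ∧ T'.Nonempty := by
      by_cases h : last ∈ T
      · exact ⟨Tᶜ, by simp [h], hTcsum, hTcne⟩
      · exact ⟨T, h, hTsum, hTne⟩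
    have hlt : ∀ j ∈ T', j.val < k - 1 := by
      intro j hj
      have hne : j ≠ last := fun h => hT'last (h ▸ hj)
      have hjk := j.isLt
      by_contra h'
      exact hne (Fin.ext (by simp [hlastdef]; omega))
    set g : Fin (k - 1) → ZMod 2 :=
      fun i => if Fin.castLE (by omega : k - 1 ≤ k) i ∈ T' then 1 else 0 with hgdef
    have himg : T' = (Finset.univ.filter
        (fun i : Fin (k - 1) => Fin.castLE (by omega : k - 1 ≤ k) i ∈ T')).image
        (Fin.castLE (by omega)) := by
      apply Finset.ext
      intro j
      simp only [Finset.mem_image, Finset.mem_filter, Finset.mem_univ, true_and]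
      constructor
      · intro hj
        refine ⟨⟨j.val, hlt j hj⟩, ?_, ?_⟩
        · have he : Fin.castLE (by omega : k - 1 ≤ k) ⟨j.val, hlt j hj⟩ = j := Fin.ext rfl
          rw [he]; exact hj
        · exact Fin.ext rfl
      · rintro ⟨i, hi, rfl⟩; exact hi
    have hgsum : (∑ i, g i • P (Fin.castLE (by omega : k - 1 ≤ k) i)) = 0 := by
      rw [← hT'sum, himg, Finset.sum_image (fun a _ b _ h => hcinj h)]
      rw [Finset.sum_filter]
      apply Finset.sum_congr rfl
      intro i _
      by_cases h : Fin.castLE (by omega : k - 1 ≤ k) i ∈ T'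
      · simp [hgdef, h]
      · simp [hgdef, h]
    have hall := hLI g hgsum
    obtain ⟨j0, hj0⟩ := hT'ne
    have hj0' := hlt j0 hj0
    have := hall ⟨j0.val, hj0'⟩
    rw [hgdef] at this
    simp only at this
    have hmem : Fin.castLE (by omega : k - 1 ≤ k) ⟨j0.val, hj0'⟩ ∈ T' := by
      have he : Fin.castLE (by omega : k - 1 ≤ k) ⟨j0.val, hj0'⟩ = j0 := Fin.ext rfl
      rw [he]; exact hj0
    rw [if_pos hmem] at this
    exact one_ne_zero this
end

section
/- Let S be a set of eight pairwise distinct vectors of 𝔽_2^4. Then the elements of S sum to zero if and only if S is the disjoint union of two affine planes of 𝔽_2^4, i.e., S = (a + W) ∪ (a' + W') for cosets of 2-dimensional linear subspaces W, W' with (a + W) ∩ (a' + W') = ∅. -/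
/-!
In characteristic two, four distinct points `p, q, r, t` sum to zero exactly when `t = p + q + r`,
and then they form the affine plane `p + span {p + q, p + r}`; conversely an affine plane has four
points and is closed under `(x, y, z) ↦ x + y + z`, which forces its sum to vanish.
So an 8-set `S` summing to zero splits into two planes as soon as it contains four elements summing
to zero, the complement then summing to zero as well. Such a quadruple exists by pigeonhole: the 56
ordered pairs of distinct elements of `S` have their sums in a space of 16 elements, so some sum
is attained by two different unordered pairs `{x, y}`, `{z, w}`, and then `x + y + z + w = 0`.
-/

open Finset Module

variable {V : Type*} [AddCommGroup V] [Module (ZMod 2) V]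

lemma zmod_two_eq_zero_or_one (c : ZMod 2) : c = 0 ∨ c = 1 := by decide +revert

namespace ZModModule

@[simp]
lemma add_add_cancel_left (a b : V) : a + (a + b) = b := by
  rw [← add_assoc, add_self, zero_add]

lemma add_eq_zero_iff_eq {a b : V} : a + b = 0 ↔ a = b := by
  rw [← sub_eq_add, sub_eq_zero]

lemma finrank_eq_two_iff_natCard_eq_four [Finite V] :
    finrank (ZMod 2) V = 2 ↔ Nat.card V = 4 := by
  rw [natCard_eq_pow_finrank (K := ZMod 2), Nat.card_zmod, show 4 = 2 ^ 2 from rfl]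
  exact (Nat.pow_right_injective le_rfl).eq_iff.symm

end ZModModule

open ZModModule

lemma card_eq_four_and_sum_eq_zero_of_add_eq [DecidableEq V] {x y z w : V}
    (hxy : x ≠ y) (hzx : z ≠ x) (hzy : z ≠ y) (h : x + y = z + w) :
    #({x, y, z, w} : Finset V) = 4 ∧ ∑ t ∈ {x, y, z, w}, t = 0 := by
  have hxw : x ≠ w := by
    rintro rfl; exact hzy (add_left_cancel (h.trans (add_comm z x))).symm
  have hyw : y ≠ w := by
    rintro rfl; exact hzx (add_right_cancel h).symm
  have hzw : z ≠ w := by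
    rintro rfl; exact hxy (add_eq_zero_iff_eq.1 (h.trans (add_self z)))
  refine ⟨card_eq_four.2 ⟨x, y, z, w, hxy, hzx.symm, hxw, hzy.symm, hyw, hzw, rfl⟩, ?_⟩
  rw [sum_insert (by simp [hxy, hzx.symm, hxw]), sum_insert (by simp [hzy.symm, hyw]),
    sum_insert (by simpa using hzw), sum_singleton, ← add_assoc, h, add_self]

lemma sum_eq_zero_of_card_eq_four_of_add_add_mem [DecidableEq V] {s : Finset V} (hs : #s = 4)
    (hclosed : ∀ x ∈ s, ∀ y ∈ s, ∀ z ∈ s, x + y + z ∈ s) : ∑ x ∈ s, x = 0 := by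
  obtain ⟨p, q, r, t, hpq, hpr, -, hqr, -, -, rfl⟩ := card_eq_four.1 hs
  have hpqr : p + q + r = t := by
    have := hclosed p (by simp) q (by simp) r (by simp)
    simp only [mem_insert, mem_singleton] at this
    rcases this with h | h | h | h
    · exact absurd (add_eq_zero_iff_eq.1 (by rwa [add_assoc, add_eq_left] at h)) hqr
    · exact absurd (add_eq_zero_iff_eq.1 (by rwa [add_right_comm, add_eq_right] at h)) hpr
    · exact absurd (add_eq_zero_iff_eq.1 (by rwa [add_eq_right] at h)) hpq
    · exact h
  refine (card_eq_four_and_sum_eq_zero_of_add_eq hpq hpr.symm hqr.symm ?_).2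
  rw [← hpqr, add_comm (p + q), add_add_cancel_left]

theorem exists_subset_card_eq_four_sum_eq_zero [Fintype V] [DecidableEq V] {S : Finset V}
    (hS : 2 * Fintype.card V < #S * (#S - 1)) : ∃ T ⊆ S, #T = 4 ∧ ∑ x ∈ T, x = 0 := by
  have hlt : #(univ : Finset V) * 2 < #S.offDiag := by
    rw [offDiag_card, card_univ, ← Nat.mul_sub_one]; linarith
  obtain ⟨b, -, hb⟩ := exists_lt_card_fiber_of_mul_lt_card_of_maps_to
    (f := fun q : V × V => q.1 + q.2) (fun _ _ => mem_univ _) hlt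
  set F := {q ∈ S.offDiag | q.1 + q.2 = b}
  obtain ⟨⟨x, y⟩, hxyF⟩ : F.Nonempty := card_pos.1 (by omega)
  obtain ⟨⟨z, w⟩, hzwF⟩ : (F \ {(x, y), (y, x)}).Nonempty := by
    rw [← card_pos]
    have := le_card_sdiff {(x, y), (y, x)} F
    have := card_le_two (a := (x, y)) (b := (y, x))
    omega
  simp only [F, mem_sdiff, mem_filter, mem_offDiag, mem_insert, mem_singleton, Prod.mk.injEq,
    not_or, not_and] at hxyF hzwF
  obtain ⟨⟨hx, hy, hxy⟩, rfl⟩ := hxyF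
  obtain ⟨⟨⟨hz, hw, -⟩, hsum⟩, hne⟩ := hzwF
  have hzx : z ≠ x := by
    rintro rfl; exact hne.1 rfl (add_left_cancel hsum)
  have hzy : z ≠ y := by
    rintro rfl; exact hne.2 rfl (add_left_cancel (hsum.trans (add_comm x z)))
  refine ⟨{x, y, z, w}, by simp [insert_subset_iff, *],
    card_eq_four_and_sum_eq_zero_of_add_eq hxy hzx hzy hsum.symm⟩

def IsAffinePlane (P : Set V) : Prop :=
  ∃ (W : Submodule (ZMod 2) V) (a : V), finrank (ZMod 2) W = 2 ∧ P = (a + ·) '' W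

lemma add_add_mem_image_add {W : Submodule (ZMod 2) V} {a x y z : V}
    (hx : x ∈ (a + ·) '' (W : Set V)) (hy : y ∈ (a + ·) '' (W : Set V))
    (hz : z ∈ (a + ·) '' (W : Set V)) : x + y + z ∈ (a + ·) '' (W : Set V) := by
  obtain ⟨u, hu, rfl⟩ := hx
  obtain ⟨v, hv, rfl⟩ := hy
  obtain ⟨w, hw, rfl⟩ := hz
  refine ⟨u + v + w, add_mem (add_mem hu hv) hw, ?_⟩
  calc a + (u + v + w) = a + (u + v + w) + (a + a) := by rw [add_self, add_zero]
    _ = a + u + (a + v) + (a + w) := by abel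

lemma coe_span_pair (u v : V) : (Submodule.span (ZMod 2) {u, v} : Set V) = {0, u, v, u + v} := by
  ext x
  simp only [SetLike.mem_coe, Submodule.mem_span_pair, Set.mem_insert_iff, Set.mem_singleton_iff]
  constructor
  · rintro ⟨c, d, rfl⟩
    rcases zmod_two_eq_zero_or_one c with rfl | rfl <;>
      rcases zmod_two_eq_zero_or_one d with rfl | rfl <;> simp
  · rintro (rfl | rfl | rfl | rfl)
    exacts [⟨0, 0, by simp⟩, ⟨1, 0, by simp⟩, ⟨0, 1, by simp⟩, ⟨1, 1, by simp⟩]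

theorem isAffinePlane_coe_iff [Finite V] [DecidableEq V] {s : Finset V} :
    IsAffinePlane (s : Set V) ↔ #s = 4 ∧ ∑ x ∈ s, x = 0 := by
  constructor
  · rintro ⟨W, a, hW, hs⟩
    have hcard : #s = 4 := by
      rw [← Set.ncard_coe_finset, ← Nat.card_coe_set_eq, hs,
        Nat.card_image_of_injective (add_right_injective a)]
      exact finrank_eq_two_iff_natCard_eq_four.1 hW
    refine ⟨hcard, sum_eq_zero_of_card_eq_four_of_add_add_mem hcard fun x hx y hy z hz => ?_⟩
    rw [← mem_coe, hs] at *
    exact add_add_mem_image_add hx hy hz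
  · rintro ⟨hs, hsum⟩
    obtain ⟨p, q, r, t, hpq, hpr, hpt, hqr, hqt, hrt, rfl⟩ := card_eq_four.1 hs
    have ht : p + (p + q + (p + r)) = t := by
      rw [sum_insert (by simp [*]), sum_insert (by simp [*]), sum_insert (by simp [*]),
        sum_singleton, ← add_assoc, ← add_assoc, add_eq_zero_iff_eq] at hsum
      calc p + (p + q + (p + r)) = p + q + r + (p + p) := by abel
        _ = t := by rw [add_self, add_zero, hsum]
    have hplane : (({p, q, r, t} : Finset V) : Set V) =
        (p + ·) '' (Submodule.span (ZMod 2) {p + q, p + r} : Set V) := by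
      rw [coe_span_pair]
      simp [Set.image_insert_eq, ht]
    refine ⟨_, p, ?_, hplane⟩
    rw [finrank_eq_two_iff_natCard_eq_four, ← SetLike.coe_sort_coe,
      ← Nat.card_image_of_injective (add_right_injective p),
      ← hplane, Nat.card_coe_set_eq, Set.ncard_coe_finset, hs]

/-- A set of eight pairwise distinct vectors of 𝔽₂⁴ sums to zero
iff it is the disjoint union of two affine planes (cosets of 2-dimensional
linear subspaces) of 𝔽₂⁴. -/
theorem stmt_14 (S : Finset (Fin 4 → ZMod 2)) (hcard : S.card = 8) :
    (∑ x ∈ S, x) = 0 ↔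
    ∃ (W W' : Submodule (ZMod 2) (Fin 4 → ZMod 2)) (a a' : Fin 4 → ZMod 2),
      Module.finrank (ZMod 2) W = 2 ∧ Module.finrank (ZMod 2) W' = 2 ∧
      (S : Set (Fin 4 → ZMod 2)) =
        ((a + ·) '' (W : Set (Fin 4 → ZMod 2))) ∪
          ((a' + ·) '' (W' : Set (Fin 4 → ZMod 2))) ∧
      Disjoint ((a + ·) '' (W : Set (Fin 4 → ZMod 2)))
        ((a' + ·) '' (W' : Set (Fin 4 → ZMod 2))) := by
  constructor
  · intro hsum
    obtain ⟨T, hTS, hT⟩ := exists_subset_card_eq_four_sum_eq_zero (S := S) (by simp [hcard])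
    have hR : #(S \ T) = 4 ∧ ∑ x ∈ S \ T, x = 0 := by
      rw [← sum_sdiff hTS, hT.2, add_zero] at hsum
      rw [card_sdiff_of_subset hTS, hcard, hT.1]
      exact ⟨rfl, hsum⟩
    obtain ⟨W, a, hW, hTW⟩ := isAffinePlane_coe_iff.2 hT
    obtain ⟨W', a', hW', hRW'⟩ := isAffinePlane_coe_iff.2 hR
    refine ⟨W, W', a, a', hW, hW', ?_, ?_⟩
    · rw [← hTW, ← hRW', ← coe_union, union_sdiff_of_subset hTS]
    · rw [← hTW, ← hRW', disjoint_coe]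
      exact disjoint_sdiff
  · rintro ⟨W, W', a, a', hW, hW', hS, hdisj⟩
    lift (a + ·) '' (W : Set (Fin 4 → ZMod 2)) to Finset (Fin 4 → ZMod 2)
      using Set.toFinite _ with T hT
    lift (a' + ·) '' (W' : Set (Fin 4 → ZMod 2)) to Finset (Fin 4 → ZMod 2)
      using Set.toFinite _ with T' hT'
    rw [← coe_union, coe_inj] at hS
    rw [disjoint_coe] at hdisj
    rw [hS, sum_union hdisj, (isAffinePlane_coe_iff.1 ⟨W, a, hW, hT⟩).2,
      (isAffinePlane_coe_iff.1 ⟨W', a', hW', hT'⟩).2, add_zero]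
end

section
/- Let e_1, …, e_6 be the canonical basis of 𝔽_2^6 and let S = {0, e_1, e_2, e_3, e_4, e_5, e_6, e_1+e_2+e_3+e_4+e_5+e_6}. Then S consists of eight pairwise distinct vectors whose sum is zero, yet S is not the disjoint union of two affine planes of 𝔽_2^6 (cosets of 2-dimensional linear subspaces). -/
/-!
Over `𝔽₂` an affine plane `a + W` consists of the four points `a + w`, `w ∈ W`, and their sum is
`4 • a + ∑ w ∈ W, w = 0`. So a union of two affine planes contains four distinct points summing to
zero, whereas a finite check shows that no four distinct points of `S` do.
-/

open Finset

theorem Submodule.exists_finset_coe_eq_vadd_card_eq_four_sum_eq_zero {V : Type*} [AddCommGroup V]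
    [Module (ZMod 2) V] {W : Submodule (ZMod 2) V} (hW : Module.finrank (ZMod 2) W = 2) (a : V) :
    ∃ T : Finset V, (T : Set V) = (a + ·) '' W ∧ T.card = 4 ∧ ∑ x ∈ T, x = 0 := by
  classical
  have : Module.Finite (ZMod 2) W := Module.finite_of_finrank_eq_succ hW
  let e := (Module.finBasisOfFinrankEq (ZMod 2) W hW).equivFun.symm
  let p : (Fin 2 → ZMod 2) → V := fun c => a + (e c : V)
  have hp : Function.Injective p := fun c d h =>
    e.injective (Subtype.coe_injective (add_left_cancel h))
  refine ⟨univ.image p, ?_, ?_, ?_⟩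
  · ext x
    simp only [coe_image, coe_univ, Set.image_univ, Set.mem_range, Set.mem_image, SetLike.mem_coe]
    constructor
    · rintro ⟨c, rfl⟩
      exact ⟨e c, (e c).2, rfl⟩
    · rintro ⟨w, hw, rfl⟩
      exact ⟨e.symm ⟨w, hw⟩, by simp [p]⟩
  · rw [card_image_of_injective _ hp]
    rfl
  · have h4 : (4 : ℕ) • a = 0 := by
      rw [← Nat.cast_smul_eq_nsmul (ZMod 2), show ((4 : ℕ) : ZMod 2) = 0 from rfl, zero_smul]
    have hsum : ∑ c : Fin 2 → ZMod 2, c = 0 := by decide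
    have hsumW : ∑ c, (e c : V) = 0 := by
      rw [← Submodule.coe_sum, ← map_sum, hsum, map_zero, Submodule.coe_zero]
    rw [sum_image fun c _ d _ h => hp h, sum_add_distrib, sum_const, card_univ, hsumW, add_zero]
    exact h4

def unitVectorsZeroAllOnes : Finset (Fin 6 → ZMod 2) :=
  insert 0 (insert (∑ i, Pi.single i 1) (univ.image fun i => Pi.single i 1))

def unitVectorsZeroAllOnesEnum : Fin 8 → Fin 6 → ZMod 2 :=
  ![0, Pi.single 0 1, Pi.single 1 1, Pi.single 2 1, Pi.single 3 1, Pi.single 4 1,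
    Pi.single 5 1, ∑ i, Pi.single i 1]

theorem unitVectorsZeroAllOnesEnum_injective : Function.Injective unitVectorsZeroAllOnesEnum := by
  decide

set_option maxRecDepth 10000 in
theorem image_unitVectorsZeroAllOnesEnum :
    univ.image unitVectorsZeroAllOnesEnum = unitVectorsZeroAllOnes := by
  decide

set_option maxRecDepth 10000 in
theorem sum_unitVectorsZeroAllOnesEnum_ne_zero :
    ∀ I ∈ (univ : Finset (Fin 8)).powersetCard 4, ∑ i ∈ I, unitVectorsZeroAllOnesEnum i ≠ 0 := by
  decide

theorem sum_ne_zero_of_subset_unitVectorsZeroAllOnes {T : Finset (Fin 6 → ZMod 2)}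
    (hT : T ⊆ unitVectorsZeroAllOnes) (hcard : T.card = 4) : ∑ x ∈ T, x ≠ 0 := by
  rw [← image_unitVectorsZeroAllOnesEnum] at hT
  obtain ⟨I, -, rfl⟩ := subset_image_iff.mp hT
  have hinj : Set.InjOn unitVectorsZeroAllOnesEnum I := unitVectorsZeroAllOnesEnum_injective.injOn
  rw [card_image_of_injOn hinj] at hcard
  rw [sum_image hinj]
  exact sum_unitVectorsZeroAllOnesEnum_ne_zero I (mem_powersetCard.mpr ⟨subset_univ I, hcard⟩)

/-- In 𝔽₂⁶, the set S = {0, e₁, …, e₆, e₁+⋯+e₆} consists of eight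
pairwise distinct vectors summing to zero, yet S is not the disjoint union of
two affine planes (cosets of 2-dimensional linear subspaces). -/
theorem stmt_16
    (S : Finset (Fin 6 → ZMod 2))
    (hS : S = insert (0 : Fin 6 → ZMod 2)
      (insert (∑ i : Fin 6, (Pi.single i 1 : Fin 6 → ZMod 2))
        (Finset.univ.image fun i : Fin 6 => (Pi.single i 1 : Fin 6 → ZMod 2)))) :
    S.card = 8 ∧ (∑ x ∈ S, x) = 0 ∧
    ¬ ∃ (W W' : Submodule (ZMod 2) (Fin 6 → ZMod 2)) (a a' : Fin 6 → ZMod 2),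
      Module.finrank (ZMod 2) W = 2 ∧ Module.finrank (ZMod 2) W' = 2 ∧
      (S : Set (Fin 6 → ZMod 2)) =
        ((a + ·) '' (W : Set (Fin 6 → ZMod 2))) ∪
          ((a' + ·) '' (W' : Set (Fin 6 → ZMod 2))) ∧
      Disjoint ((a + ·) '' (W : Set (Fin 6 → ZMod 2)))
        ((a' + ·) '' (W' : Set (Fin 6 → ZMod 2))) := by
  subst hS
  refine ⟨by decide, by decide, ?_⟩
  rintro ⟨W, _, a, _, hW, -, hcover, -⟩
  obtain ⟨T, hT, hcard, hsum⟩ := W.exists_finset_coe_eq_vadd_card_eq_four_sum_eq_zero hW a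
  refine sum_ne_zero_of_subset_unitVectorsZeroAllOnes ?_ hcard hsum
  rw [← coe_subset, unitVectorsZeroAllOnes, hcover, hT]
  exact Set.subset_union_left
end

section
/- Let n ≥ 2, let P be the set of the 2^n − 1 non-zero vectors of 𝔽_2^n, and for 2 ≤ k ≤ 2^n − 1 let B be the family of all k-element subsets of P that are linearly dependent over 𝔽_2. Then (P, B) is a 2-design: there is a constant λ such that every pair of distinct non-zero vectors of 𝔽_2^n is contained in exactly λ members of B. -/
/-!
Over `𝔽₂` two distinct non-zero vectors are linearly independent, so any such pair extends to a
basis and `GL(𝔽₂ⁿ)` acts transitively on ordered pairs of distinct non-zero vectors. A linear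
automorphism maps linearly dependent `k`-subsets of non-zero vectors to such subsets, so the
number of them through a pair is the same for all pairs.
-/

open Finset

theorem Equiv.exists_apply_eq_and_apply_eq {α β : Type*} (e : α ≃ β) {a b : α} (hab : a ≠ b)
    {c d : β} (hcd : c ≠ d) : ∃ e' : α ≃ β, e' a = c ∧ e' b = d := by
  classical
  let e₁ : α ≃ β := e.trans (Equiv.swap (e a) c)
  have he₁a : e₁ a = c := by simp [e₁]
  have he₁b : e₁ b ≠ c := he₁a ▸ e₁.injective.ne hab.symm
  refine ⟨e₁.trans (Equiv.swap (e₁ b) d), ?_, by simp⟩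
  simp [he₁a, Equiv.swap_apply_of_ne_of_ne he₁b.symm hcd]

theorem LinearIndependent.exists_linearEquiv_apply_eq_and_apply_eq {K V : Type*} [DivisionRing K]
    [AddCommGroup V] [Module K V] {x y x' y' : V} (h : LinearIndependent K ![x, y])
    (h' : LinearIndependent K ![x', y']) :
    ∃ f : V ≃ₗ[K] V, f x = x' ∧ f y = y' := by
  have hs := h.linearIndepOn_id
  have hs' := h'.linearIndepOn_id
  let b := Module.Basis.extend hs
  let b' := Module.Basis.extend hs'
  let u₁ : hs.extend (Set.subset_univ _) := ⟨x, hs.subset_extend _ ⟨0, rfl⟩⟩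
  let u₂ : hs.extend (Set.subset_univ _) := ⟨y, hs.subset_extend _ ⟨1, rfl⟩⟩
  let v₁ : hs'.extend (Set.subset_univ _) := ⟨x', hs'.subset_extend _ ⟨0, rfl⟩⟩
  let v₂ : hs'.extend (Set.subset_univ _) := ⟨y', hs'.subset_extend _ ⟨1, rfl⟩⟩
  have hu : u₁ ≠ u₂ := by simpa [u₁, u₂] using h.injective.ne zero_ne_one
  have hv : v₁ ≠ v₂ := by simpa [v₁, v₂] using h'.injective.ne zero_ne_one
  obtain ⟨e, he₁, he₂⟩ := (b.indexEquiv b').exists_apply_eq_and_apply_eq hu hv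
  refine ⟨b.equiv b' e, ?_, ?_⟩
  · simpa [b, b', he₁] using b.equiv_apply u₁ b' e
  · simpa [b, b', he₂] using b.equiv_apply u₂ b' e

theorem ZMod.linearIndependent_pair_of_ne {M : Type*} [AddCommGroup M] [Module (ZMod 2) M]
    {x y : M} (hx : x ≠ 0) (hy : y ≠ 0) (hxy : x ≠ y) : LinearIndependent (ZMod 2) ![x, y] := by
  refine (LinearIndependent.pair_iff' hx).2 (Fin.forall_fin_two.2 ⟨?_, ?_⟩)
  -- `Fin.forall_fin_two` leaves `Fin 2` numerals, which are the `ZMod 2` ones by definition.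
  · rwa [show (0 : Fin 2) = (0 : ZMod 2) from rfl, zero_smul, ne_comm]
  · rwa [show (1 : Fin 2) = (1 : ZMod 2) from rfl, one_smul]

theorem exists_zero_sum_subset_map_iff {V : Type*} [AddCommGroup V] (f : V ≃+ V)
    (s : Finset V) :
    (∃ t ⊆ s.map (f : V ≃ V).toEmbedding, t.Nonempty ∧ ∑ w ∈ t, w = 0) ↔
      ∃ t ⊆ s, t.Nonempty ∧ ∑ w ∈ t, w = 0 := by
  simp only [subset_map_iff, ↓existsAndEq, and_true, map_nonempty, sum_map,
    Equiv.coe_toEmbedding, EquivLike.coe_coe, ← map_sum f, map_eq_zero_iff f f.injective]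

section Blocks

variable {V : Type*} [AddCommGroup V] [Fintype V] [DecidableEq V]

def dependentBlocksThrough (k : ℕ) (x y : V) : Finset (Finset V) :=
  univ.filter fun s : Finset V =>
    (∀ w ∈ s, w ≠ 0) ∧ s.card = k ∧ (∃ t ∈ s.powerset, t.Nonempty ∧ (∑ w ∈ t, w) = 0) ∧
      x ∈ s ∧ y ∈ s

theorem mem_dependentBlocksThrough_map_iff (f : V ≃+ V) {k : ℕ} {x y : V} (s : Finset V) :
    s.map (f : V ≃ V).toEmbedding ∈ dependentBlocksThrough k (f x) (f y) ↔
      s ∈ dependentBlocksThrough k x y := by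
  simp [dependentBlocksThrough, exists_zero_sum_subset_map_iff]

theorem card_dependentBlocksThrough_apply (f : V ≃+ V) (k : ℕ) (x y : V) :
    #(dependentBlocksThrough k (f x) (f y)) = #(dependentBlocksThrough k x y) :=
  (card_equiv (f : V ≃ V).finsetCongr fun s =>
    (mem_dependentBlocksThrough_map_iff f s).symm).symm

end Blocks

theorem stmt_18_general (n : ℕ) (k : ℕ) :
    ∃ lam : ℕ, ∀ x y : Fin n → ZMod 2, x ≠ 0 → y ≠ 0 → x ≠ y →
      (Finset.univ.filter (fun s : Finset (Fin n → ZMod 2) =>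
        (∀ w ∈ s, w ≠ 0) ∧ s.card = k ∧
        (∃ t ∈ s.powerset, t.Nonempty ∧ (∑ w ∈ t, w) = 0) ∧
        x ∈ s ∧ y ∈ s)).card = lam := by
  show ∃ lam : ℕ, ∀ x y : Fin n → ZMod 2, x ≠ 0 → y ≠ 0 → x ≠ y →
    #(dependentBlocksThrough k x y) = lam
  by_cases h : ∃ x₀ y₀ : Fin n → ZMod 2, x₀ ≠ 0 ∧ y₀ ≠ 0 ∧ x₀ ≠ y₀
  · obtain ⟨x₀, y₀, hx₀, hy₀, hxy₀⟩ := h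
    refine ⟨#(dependentBlocksThrough k x₀ y₀), fun x y hx hy hxy => ?_⟩
    obtain ⟨f, rfl, rfl⟩ :=
      (ZMod.linearIndependent_pair_of_ne hx₀ hy₀ hxy₀).exists_linearEquiv_apply_eq_and_apply_eq
        (ZMod.linearIndependent_pair_of_ne hx hy hxy)
    exact card_dependentBlocksThrough_apply f.toAddEquiv k x₀ y₀
  · push Not at h
    exact ⟨0, fun x y hx hy hxy => (hxy (h x y hx hy)).elim⟩

/-- Let P be the set of non-zero vectors of 𝔽₂ⁿ (n ≥ 2) and, for
2 ≤ k ≤ 2ⁿ − 1, let B be the family of linearly dependent k-subsets of P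
(those containing a nonempty subset with zero sum). Then (P,B) is a 2-design:
every pair of distinct non-zero vectors lies in exactly λ members of B. -/
theorem stmt_18 (n : ℕ) (hn : 2 ≤ n) (k : ℕ) (hk2 : 2 ≤ k) (hk : k ≤ 2 ^ n - 1) :
    ∃ lam : ℕ, ∀ x y : Fin n → ZMod 2, x ≠ 0 → y ≠ 0 → x ≠ y →
      (Finset.univ.filter (fun s : Finset (Fin n → ZMod 2) =>
        (∀ w ∈ s, w ≠ 0) ∧ s.card = k ∧
        (∃ t ∈ s.powerset, t.Nonempty ∧ (∑ w ∈ t, w) = 0) ∧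
        x ∈ s ∧ y ∈ s)).card = lam :=
  stmt_18_general n k
end
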